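/- arXiv:1103.3893 — 7 statements merged into one kernel-verified Lean document; each statement's English description precedes it below -/
import Mathlib

section
/- The integral $-\int_0^\pi \log^2(2\sin(\theta/2))\,d\theta = -\pi^3/12$, i.e. $\int_0^\pi \log^2(2\sin(\theta/2))\,d\theta = \pi^3/12$. -/
/-!
For `|r| < 1` the Taylor series of `log (1 - z)` gives
`log ‖1 - r e^{iθ}‖ = -∑ rⁿ cos (nθ) / n`, and the cosines `cos (nθ)`, `n ≥ 1`, are orthogonal on
`[0, π]` with squared norm `π / 2`; hence `∫₀^π log² ‖1 - r e^{iθ}‖ dθ = (π / 2) ∑ r²ⁿ / n²`.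
Let `r → 1⁻`. For `r ≥ 1/4` and `θ ∈ (0, π]` one has `θ / π ≤ sin (θ / 2) ≤ ‖1 - r e^{iθ}‖ ≤ 2`
(Jordan's inequality for the first step), so the integrands are dominated by
`log² 2 + log² (θ / π)`, and the left side tends to `∫₀^π log² (2 sin (θ / 2)) dθ`.
The right side tends to `(π / 2) ζ(2) = π³ / 12`.
-/

open Real

open MeasureTheory Filter Topology Set

noncomputable def logNormOneSub (r θ : ℝ) : ℝ :=
  Real.log ‖1 - r * Complex.exp (θ * Complex.I)‖

lemma norm_one_sub_mul_exp_sq (r θ : ℝ) :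
    ‖1 - r * Complex.exp (θ * Complex.I)‖ ^ 2 = (1 - r) ^ 2 + 4 * r * sin (θ / 2) ^ 2 := by
  rw [Complex.sq_norm, Complex.normSq_apply]
  simp only [Complex.sub_re, Complex.sub_im, Complex.one_re, Complex.one_im,
    Complex.re_ofReal_mul, Complex.im_ofReal_mul,
    Complex.exp_ofReal_mul_I_re, Complex.exp_ofReal_mul_I_im]
  have hcos : cos θ = 1 - 2 * sin (θ / 2) ^ 2 := by
    nth_rewrite 1 [← mul_div_cancel₀ θ two_ne_zero]
    rw [cos_two_mul']
    linarith [sin_sq_add_cos_sq (θ / 2)]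
  linear_combination r ^ 2 * sin_sq_add_cos_sq θ - 2 * r * hcos

lemma logNormOneSub_one (θ : ℝ) : logNormOneSub 1 θ = log (2 * sin (θ / 2)) := by
  rw [logNormOneSub, Complex.ofReal_one, one_mul, norm_sub_rev, mul_comm,
    Complex.norm_exp_I_mul_ofReal_sub_one, norm_eq_abs, log_abs]

lemma hasSum_logNormOneSub {r : ℝ} (hr : |r| < 1) (θ : ℝ) :
    HasSum (fun n : ℕ => r ^ n / n * cos (n * θ)) (-logNormOneSub r θ) := by
  have hz : ‖(r : ℂ) * Complex.exp (θ * Complex.I)‖ < 1 := by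
    rwa [norm_mul, Complex.norm_exp_ofReal_mul_I, mul_one, Complex.norm_real, norm_eq_abs]
  convert Complex.hasSum_re (Complex.hasSum_taylorSeries_neg_log hz) using 2 with n
  · have hterm : ((r : ℂ) * Complex.exp (θ * Complex.I)) ^ n / n
        = ((r ^ n / n : ℝ) : ℂ) * Complex.exp ((n * θ : ℝ) * Complex.I) := by
      push_cast
      rw [mul_pow, ← Complex.exp_nat_mul]
      ring_nf
    rw [hterm, Complex.re_ofReal_mul, Complex.exp_ofReal_mul_I_re]
  · rw [Complex.neg_re, Complex.log_re, logNormOneSub]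

lemma abs_pow_div_nat_mul_cos_le (r θ : ℝ) (n : ℕ) : |r ^ n / n * cos (n * θ)| ≤ |r| ^ n := by
  rcases eq_or_ne n 0 with rfl | hn
  · simp
  rw [abs_mul, abs_div, abs_pow, Nat.abs_cast]
  calc |r| ^ n / n * |cos (n * θ)| ≤ |r| ^ n / n :=
        mul_le_of_le_one_right (by positivity) (abs_cos_le_one _)
    _ ≤ |r| ^ n := div_le_self (by positivity) (by exact_mod_cast Nat.one_le_iff_ne_zero.mpr hn)

lemma hasSum_logNormOneSub_sq {r : ℝ} (hr : |r| < 1) (θ : ℝ) :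
    HasSum (fun p : ℕ × ℕ => r ^ p.1 / p.1 * cos (p.1 * θ) * (r ^ p.2 / p.2 * cos (p.2 * θ)))
      (logNormOneSub r θ ^ 2) := by
  have hs : Summable fun n : ℕ => ‖r ^ n / n * cos (n * θ)‖ :=
    .of_nonneg_of_le (fun _ => norm_nonneg _) (abs_pow_div_nat_mul_cos_le r θ)
      (summable_geometric_of_lt_one (abs_nonneg r) hr)
  have h := hasSum_logNormOneSub hr θ
  simpa [sq] using h.mul h (summable_mul_of_summable_norm hs hs)

lemma integral_cos_int_mul_of_ne_zero {k : ℤ} (hk : k ≠ 0) :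
    ∫ θ in (0:ℝ)..π, cos (k * θ) = 0 := by
  rw [intervalIntegral.integral_comp_mul_left (fun x => cos x) (Int.cast_ne_zero.mpr hk)]
  simp [integral_cos, sin_int_mul_pi]

lemma integral_cos_nat_mul_mul_cos_nat_mul {n : ℕ} (hn : n ≠ 0) (m : ℕ) :
    ∫ θ in (0:ℝ)..π, cos (n * θ) * cos (m * θ) = if n = m then π / 2 else 0 := by
  have hprod : ∀ θ : ℝ, cos (n * θ) * cos (m * θ)
      = cos (((n - m : ℤ) : ℝ) * θ) / 2 + cos (((n + m : ℤ) : ℝ) * θ) / 2 := by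
    intro θ
    push_cast
    rw [sub_mul, add_mul, cos_sub, cos_add]
    ring
  have hint : ∀ k : ℤ, IntervalIntegrable (fun θ => cos (k * θ) / 2) volume 0 π :=
    fun k => (by fun_prop : Continuous fun θ : ℝ => cos (k * θ) / 2).intervalIntegrable _ _
  simp_rw [hprod]
  rw [intervalIntegral.integral_add (hint _) (hint _), intervalIntegral.integral_div,
    intervalIntegral.integral_div,
    integral_cos_int_mul_of_ne_zero (by omega : (n + m : ℤ) ≠ 0)]
  split_ifs with h
  · simp [h]
  · rw [integral_cos_int_mul_of_ne_zero (by omega : (n - m : ℤ) ≠ 0)]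
    simp

lemma pow_div_nat_sq_le {r : ℝ} (hr : |r| ≤ 1) (n : ℕ) :
    (r ^ n / n) ^ 2 ≤ 1 / (n : ℝ) ^ 2 := by
  rw [div_pow, ← pow_mul, mul_comm, pow_mul]
  gcongr
  exact pow_le_one₀ (sq_nonneg r) ((sq_le_one_iff_abs_le_one r).mpr hr)

lemma integral_logNormOneSub_sq {r : ℝ} (hr : |r| < 1) :
    ∫ θ in (0:ℝ)..π, logNormOneSub r θ ^ 2 = π / 2 * ∑' n : ℕ, (r ^ n / n) ^ 2 := by
  have hgeo := summable_geometric_of_lt_one (abs_nonneg r) hr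
  have hint := intervalIntegral.hasSum_integral_of_dominated_convergence
    (μ := volume) (a := 0) (b := π)
    (F := fun (p : ℕ × ℕ) θ => r ^ p.1 / p.1 * cos (p.1 * θ) * (r ^ p.2 / p.2 * cos (p.2 * θ)))
    (f := fun θ => logNormOneSub r θ ^ 2)
    (fun p _ => |r| ^ p.1 * |r| ^ p.2)
    (fun p => (by fun_prop : Continuous _).aestronglyMeasurable)
    (fun p => ae_of_all _ fun θ _ => by
      rw [norm_mul]
      exact mul_le_mul (abs_pow_div_nat_mul_cos_le r θ p.1)
        (abs_pow_div_nat_mul_cos_le r θ p.2) (norm_nonneg _) (by positivity))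
    (ae_of_all _ fun _ _ =>
      hgeo.mul_of_nonneg hgeo (fun _ => by positivity) (fun _ => by positivity))
    intervalIntegrable_const
    (ae_of_all _ fun θ _ => hasSum_logNormOneSub_sq hr θ)
  have hterm : ∀ p : ℕ × ℕ,
      ∫ θ in (0:ℝ)..π, r ^ p.1 / p.1 * cos (p.1 * θ) * (r ^ p.2 / p.2 * cos (p.2 * θ))
        = if p.1 = p.2 then π / 2 * (r ^ p.1 / p.1) ^ 2 else 0 := by
    rintro ⟨n, m⟩
    simp_rw [mul_mul_mul_comm (r ^ n / n)]
    rw [intervalIntegral.integral_const_mul]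
    rcases eq_or_ne n 0 with rfl | hn
    · simp
    · rw [integral_cos_nat_mul_mul_cos_nat_mul hn]
      split_ifs with h
      · subst h; ring
      · simp
  simp only [hterm] at hint
  have hdiag : HasSum (fun n : ℕ => π / 2 * (r ^ n / n) ^ 2)
      (π / 2 * ∑' n : ℕ, (r ^ n / n) ^ 2) :=
    (Summable.of_nonneg_of_le (fun _ => sq_nonneg _) (pow_div_nat_sq_le hr.le)
      (Real.summable_one_div_nat_pow.mpr one_lt_two)).hasSum.mul_left _
  refine hint.unique ((Function.Injective.hasSum_iff (g := fun n : ℕ => (n, n)) ?_ ?_).mp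
    (by simpa [Function.comp_def] using hdiag))
  · intro a b hab
    simpa using hab
  · rintro ⟨n, m⟩ hp
    rw [if_neg]
    rintro (rfl : n = m)
    exact hp ⟨n, rfl⟩

lemma tendsto_tsum_pow_div_nat_sq :
    Tendsto (fun r : ℝ => ∑' n : ℕ, (r ^ n / n) ^ 2) (𝓝[<] 1) (𝓝 (π ^ 2 / 6)) := by
  have h := tendsto_tsum_of_dominated_convergence (𝓕 := 𝓝[<] (1 : ℝ))
    (f := fun r (n : ℕ) => (r ^ n / n) ^ 2) (g := fun n : ℕ => 1 / (n : ℝ) ^ 2)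
    (Real.summable_one_div_nat_pow.mpr one_lt_two) (fun n => ?_) ?_
  · rwa [hasSum_zeta_two.tsum_eq] at h
  · have hcont : Continuous fun r : ℝ => (r ^ n / n) ^ 2 := by fun_prop
    simpa using (hcont.tendsto 1).mono_left nhdsWithin_le_nhds
  · filter_upwards [Ioo_mem_nhdsLT (show (-1 : ℝ) < 1 by norm_num)] with r hr n
    rw [norm_pow, norm_eq_abs, sq_abs]
    exact pow_div_nat_sq_le (abs_le.mpr ⟨hr.1.le, hr.2.le⟩) n

lemma log_sq_le_rpow_neg_half {x : ℝ} (hx0 : 0 < x) (hx1 : x ≤ 1) :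
    log x ^ 2 ≤ 16 * x ^ (-(1 / 2) : ℝ) := by
  have hlog : |log x * x ^ (1 / 4 : ℝ)| < 4 := by
    simpa using abs_log_mul_self_rpow_lt x (1 / 4) hx0 hx1 (by norm_num)
  have hsq : (x ^ (1 / 4 : ℝ)) ^ 2 = x ^ (1 / 2 : ℝ) := by
    rw [← rpow_natCast, ← rpow_mul hx0.le]
    norm_num
  rw [rpow_neg hx0.le, ← hsq, ← div_eq_mul_inv, le_div_iff₀ (by positivity), ← mul_pow,
    ← sq_abs]
  nlinarith [abs_nonneg (log x * x ^ (1 / 4 : ℝ))]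

lemma intervalIntegrable_log_sq_zero_one :
    IntervalIntegrable (fun x => log x ^ 2) volume 0 1 := by
  rw [intervalIntegrable_iff_integrableOn_Ioc_of_le zero_le_one]
  have hrpow := intervalIntegral.intervalIntegrable_rpow' (a := 0) (b := 1) (r := -(1 / 2))
    (by norm_num)
  refine Integrable.mono' (hrpow.const_mul 16).1 (by fun_prop) ?_
  rw [ae_restrict_iff' measurableSet_Ioc]
  refine ae_of_all _ fun x hx => ?_
  rw [norm_pow, norm_eq_abs, sq_abs]
  exact log_sq_le_rpow_neg_half hx.1 hx.2

lemma logNormOneSub_sq_le {r θ : ℝ} (hr : 1 / 4 ≤ r) (hr1 : r ≤ 1) (hθ : θ ∈ Ioc 0 π) :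
    logNormOneSub r θ ^ 2 ≤ log 2 ^ 2 + log (θ / π) ^ 2 := by
  obtain ⟨hθ0, hθπ⟩ := hθ
  set A := ‖1 - r * Complex.exp (θ * Complex.I)‖
  have hsin : θ / π ≤ sin (θ / 2) := by
    have := mul_le_sin (x := θ / 2) (by positivity) (by linarith)
    convert this using 1
    field_simp
  have hx0 : 0 < θ / π := by positivity
  have hA_ge : sin (θ / 2) ≤ A := by
    refine (pow_le_pow_iff_left₀ (hx0.le.trans hsin) (norm_nonneg _) two_ne_zero).mp ?_
    rw [norm_one_sub_mul_exp_sq]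
    nlinarith [sq_nonneg (sin (θ / 2)), sq_nonneg (1 - r)]
  have hA_le : A ≤ 2 := by
    calc A ≤ ‖(1 : ℂ)‖ + ‖(r : ℂ) * Complex.exp (θ * Complex.I)‖ := norm_sub_le _ _
      _ ≤ 2 := by
        rw [norm_mul, Complex.norm_exp_ofReal_mul_I, Complex.norm_real, norm_eq_abs,
          abs_of_nonneg (by linarith)]
        norm_num
        linarith
  have hlo : log (θ / π) ≤ logNormOneSub r θ := log_le_log hx0 (hsin.trans hA_ge)
  have hhi : logNormOneSub r θ ≤ log 2 := log_le_log (hx0.trans_le (hsin.trans hA_ge)) hA_le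
  have hlogx : log (θ / π) ≤ 0 := log_nonpos hx0.le ((div_le_one pi_pos).mpr hθπ)
  have hlog2 : 0 ≤ log 2 := log_nonneg one_le_two
  rcases le_total 0 (logNormOneSub r θ) with h | h <;> nlinarith

lemma tendsto_integral_logNormOneSub_sq :
    Tendsto (fun r => ∫ θ in (0:ℝ)..π, logNormOneSub r θ ^ 2) (𝓝[<] 1)
      (𝓝 (∫ θ in (0:ℝ)..π, logNormOneSub 1 θ ^ 2)) := by
  have hbound : IntervalIntegrable (fun θ => log 2 ^ 2 + log (θ / π) ^ 2) volume 0 π := by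
    have := intervalIntegrable_log_sq_zero_one.comp_mul_left (c := π⁻¹)
    simp only [div_inv_eq_mul, zero_mul, one_mul] at this
    simpa [div_eq_inv_mul] using intervalIntegrable_const.add this
  refine intervalIntegral.tendsto_integral_filter_of_dominated_convergence _
    (Eventually.of_forall fun r =>
      (by unfold logNormOneSub; fun_prop : Measurable _).aestronglyMeasurable)
    ?_ hbound (ae_of_all _ fun θ hθ => ?_)
  · filter_upwards [Ioo_mem_nhdsLT (show (1 / 4 : ℝ) < 1 by norm_num)] with r hr
    refine ae_of_all _ fun θ hθ => ?_
    rw [uIoc_of_le pi_pos.le] at hθ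
    rw [norm_pow, norm_eq_abs, sq_abs]
    exact logNormOneSub_sq_le hr.1.le hr.2.le hθ
  · rw [uIoc_of_le pi_pos.le] at hθ
    have hsin : 0 < sin (θ / 2) :=
      sin_pos_of_pos_of_lt_pi (by linarith [hθ.1]) (by linarith [hθ.2, pi_pos])
    have hne : ‖1 - ((1 : ℝ) : ℂ) * Complex.exp (θ * Complex.I)‖ ≠ 0 := fun h => by
      have := norm_one_sub_mul_exp_sq 1 θ
      rw [h] at this
      nlinarith
    have hcont : ContinuousAt (fun r : ℝ => ‖1 - r * Complex.exp (θ * Complex.I)‖) 1 := by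
      fun_prop
    exact ((hcont.log hne).pow 2).tendsto.mono_left nhdsWithin_le_nhds

theorem ls3_pi : ∫ θ in (0:ℝ)..π, (Real.log (2 * Real.sin (θ/2)))^2 = π^3 / 12 := by
  have hseries : ∀ᶠ r in 𝓝[<] 1,
      ∫ θ in (0:ℝ)..π, logNormOneSub r θ ^ 2 = π / 2 * ∑' n : ℕ, (r ^ n / n) ^ 2 := by
    filter_upwards [Ioo_mem_nhdsLT (show (-1 : ℝ) < 1 by norm_num)] with r hr
    exact integral_logNormOneSub_sq (abs_lt.mpr hr)
  have hlim := tendsto_nhds_unique (tendsto_integral_logNormOneSub_sq.congr' hseries)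
    (tendsto_tsum_pow_div_nat_sq.const_mul (π / 2))
  simp only [logNormOneSub_one] at hlim
  rw [hlim]
  ring
end

section
/- The integral $\int_0^\pi \log^5(2\sin(\theta/2))\,d\theta = -\frac{45}{2}\pi\,\zeta(5) - \frac{5}{4}\pi^3\zeta(3)$. -/
/-!
Write `c(θ) = 2 sin (θ / 2)`. For `x > -1` the substitution `t = sin² (θ / 2)` turns
`∫₀^π c^x` into a Beta integral, and Legendre's duplication formula evaluates it as
`π Γ(1 + x) / Γ(1 + x / 2)²`. Differentiating `k` times under the integral sign gives
`F_k(x) = ∫₀^π log^k c · c^x`, so the integral in question is `F_5(0)`.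

Near `0` we have `F_0 = π exp g` with `g(x) = log Γ(1 + x) - 2 log Γ(1 + x / 2)`
`= ∑_{k ≥ 1} (2 log (1 + x / 2k) - log (1 + x / k))`, whose derivatives are
`g^{(i+1)} = (-1)^i i! S_{i+1}` with `S_j(x) = ∑_{k ≥ 1} (2 / (2k + x)^j - 1 / (k + x)^j)`.
Leibniz's rule applied to `F_1 = g' F_0` gives `F_{n+1} = ∑ C(n, i) g^{(i+1)} F_{n-i}`, and at
`0`, where `S_1 = 0` and `S_j = (2^{1-j} - 1) ζ(j)`, this yields
`F_5(0) = π (24 S_5 - 20 S_2 S_3)`.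
-/

open Real Filter Topology MeasureTheory intervalIntegral

noncomputable section

namespace LogSine

section

open Set

def hurwitzDiffTerm (j k : ℕ) (x : ℝ) : ℝ :=
  2 / (2 * ((k : ℝ) + 1) + x) ^ j - 1 / ((k : ℝ) + 1 + x) ^ j

/-- `hurwitzDiff j x = 2^{1-j} ζ(j, 1 + x / 2) - ζ(j, 1 + x)` (Hurwitz zeta functions). -/
def hurwitzDiff (j : ℕ) (x : ℝ) : ℝ := ∑' k, hurwitzDiffTerm j k x

def logCentralBinomTerm (k : ℕ) (x : ℝ) : ℝ :=
  2 * log (1 + x / (2 * ((k : ℝ) + 1))) - log (1 + x / ((k : ℝ) + 1))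

/-- `log C(x, x / 2) = log (Γ(1 + x) / Γ(1 + x / 2)²)`, in Weierstrass product form. -/
def logCentralBinom (x : ℝ) : ℝ := ∑' k, logCentralBinomTerm k x

lemma summable_one_div_nat_add_one_pow {j : ℕ} (hj : 2 ≤ j) :
    Summable fun k : ℕ => 1 / ((k : ℝ) + 1) ^ j := by
  have := (summable_nat_add_iff 1).mpr (summable_one_div_nat_pow.mpr (by omega : 1 < j))
  simpa only [Nat.cast_add, Nat.cast_one] using this

lemma hasDerivAt_hurwitzDiffTerm (j k : ℕ) {x : ℝ} (hx : -1 < x) :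
    HasDerivAt (hurwitzDiffTerm j k) (-j * hurwitzDiffTerm (j + 1) k x) x := by
  have hk : (0 : ℝ) ≤ k := k.cast_nonneg
  have h₁ : 2 * ((k : ℝ) + 1) + x ≠ 0 := by linarith
  have h₂ : (k : ℝ) + 1 + x ≠ 0 := by linarith
  have hd₁ := ((hasDerivAt_id' x).const_add (2 * ((k : ℝ) + 1))).fun_pow j
  have hd₂ := ((hasDerivAt_id' x).const_add ((k : ℝ) + 1)).fun_pow j
  refine (((hasDerivAt_const x (2 : ℝ)).fun_div hd₁ (pow_ne_zero j h₁)).fun_sub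
    ((hasDerivAt_const x (1 : ℝ)).fun_div hd₂ (pow_ne_zero j h₂))).congr_deriv ?_
  rcases j with _ | j
  · simp
  · simp only [hurwitzDiffTerm]
    field_simp
    push_cast
    ring

lemma abs_hurwitzDiffTerm_le {j : ℕ} (hj : j ≠ 0) (k : ℕ) {x : ℝ} (hx : |x| ≤ 1 / 2) :
    |hurwitzDiffTerm j k x| ≤ 2 ^ (j + 1) / ((k : ℝ) + 1) ^ j := by
  obtain ⟨hx₁, hx₂⟩ := abs_le.mp hx
  have hk : (0 : ℝ) ≤ k := k.cast_nonneg
  have h₁ : (k : ℝ) + 1 ≤ 2 * ((k : ℝ) + 1) + x := by linarith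
  have h₂ : ((k : ℝ) + 1) / 2 ≤ (k : ℝ) + 1 + x := by linarith
  have h₁' : 0 < 2 * ((k : ℝ) + 1) + x := by linarith
  have h₂' : 0 < (k : ℝ) + 1 + x := by linarith
  calc |hurwitzDiffTerm j k x|
      ≤ 2 / (2 * ((k : ℝ) + 1) + x) ^ j + 1 / ((k : ℝ) + 1 + x) ^ j := by
        unfold hurwitzDiffTerm
        refine (abs_sub _ _).trans_eq ?_
        rw [abs_of_pos (by positivity), abs_of_pos (by positivity)]
    _ ≤ 2 / ((k : ℝ) + 1) ^ j + 1 / (((k : ℝ) + 1) / 2) ^ j := by gcongr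
    _ ≤ 2 ^ j / ((k : ℝ) + 1) ^ j + 2 ^ j / ((k : ℝ) + 1) ^ j := by
        rw [div_pow, one_div_div]
        gcongr
        exact le_self_pow₀ one_le_two hj
    _ = 2 ^ (j + 1) / ((k : ℝ) + 1) ^ j := by ring

lemma abs_hurwitzDiffTerm_one_le (k : ℕ) {x : ℝ} (hx : |x| ≤ 1 / 2) :
    |hurwitzDiffTerm 1 k x| ≤ 1 / ((k : ℝ) + 1) ^ 2 := by
  obtain ⟨hx₁, hx₂⟩ := abs_le.mp hx
  have hk : (0 : ℝ) ≤ k := k.cast_nonneg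
  have h₁ : (k : ℝ) + 1 ≤ 2 * ((k : ℝ) + 1) + x := by linarith
  have h₂ : ((k : ℝ) + 1) / 2 ≤ (k : ℝ) + 1 + x := by linarith
  have h₁' : 0 < 2 * ((k : ℝ) + 1) + x := by linarith
  have h₂' : 0 < (k : ℝ) + 1 + x := by linarith
  have hden := mul_pos h₁' h₂'
  have hterm : hurwitzDiffTerm 1 k x = x / ((2 * ((k : ℝ) + 1) + x) * ((k : ℝ) + 1 + x)) := by
    unfold hurwitzDiffTerm
    field_simp
    ring
  rw [hterm, abs_div, abs_of_pos hden]
  calc |x| / ((2 * ((k : ℝ) + 1) + x) * ((k : ℝ) + 1 + x))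
      ≤ (1 / 2) / (((k : ℝ) + 1) * (((k : ℝ) + 1) / 2)) := by gcongr
    _ = 1 / ((k : ℝ) + 1) ^ 2 := by field_simp

lemma summable_hurwitzDiffTerm {j : ℕ} (hj : j ≠ 0) {x : ℝ} (hx : |x| ≤ 1 / 2) :
    Summable fun k => hurwitzDiffTerm j k x := by
  obtain rfl | hj₂ : j = 1 ∨ 2 ≤ j := by omega
  · exact .of_norm_bounded (summable_one_div_nat_add_one_pow le_rfl) fun k =>
      abs_hurwitzDiffTerm_one_le k hx
  · refine .of_norm_bounded ((summable_one_div_nat_add_one_pow hj₂).mul_left (2 ^ (j + 1)))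
      fun k => ?_
    simpa only [mul_one_div, Real.norm_eq_abs] using abs_hurwitzDiffTerm_le hj k hx

lemma hasDerivAt_hurwitzDiff {j : ℕ} (hj : j ≠ 0) {x : ℝ}
    (hx : x ∈ Ioo (-(1 / 2) : ℝ) (1 / 2)) :
    HasDerivAt (hurwitzDiff j) (-j * hurwitzDiff (j + 1) x) x := by
  have hu : Summable fun k : ℕ => j * (2 ^ (j + 2) / ((k : ℝ) + 1) ^ (j + 1)) := by
    simpa only [mul_one_div] using
      ((summable_one_div_nat_add_one_pow (by omega : 2 ≤ j + 1)).mul_left (2 ^ (j + 2))).mul_left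
        (j : ℝ)
  have hbound : ∀ (k : ℕ), ∀ y ∈ Ioo (-(1 / 2) : ℝ) (1 / 2),
      ‖-j * hurwitzDiffTerm (j + 1) k y‖ ≤ j * (2 ^ (j + 2) / ((k : ℝ) + 1) ^ (j + 1)) := by
    intro k y hy
    rw [norm_mul, norm_neg, Real.norm_natCast, Real.norm_eq_abs]
    gcongr
    exact abs_hurwitzDiffTerm_le (Nat.succ_ne_zero j) k (abs_le.mpr ⟨hy.1.le, hy.2.le⟩)
  have h := hasDerivAt_tsum_of_isPreconnected hu isOpen_Ioo isPreconnected_Ioo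
    (fun k y hy => hasDerivAt_hurwitzDiffTerm j k (by linarith [hy.1])) hbound hx
    (summable_hurwitzDiffTerm hj (abs_le.mpr ⟨hx.1.le, hx.2.le⟩)) hx
  rwa [tsum_mul_left] at h

lemma abs_log_one_add_sub_self_le {a : ℝ} (ha : |a| ≤ 1 / 2) :
    |log (1 + a) - a| ≤ 2 * a ^ 2 := by
  have h := Real.abs_log_sub_add_sum_range_le (x := -a) (by rw [abs_neg]; linarith) 1
  simp only [Finset.sum_range_one, pow_one, Nat.cast_zero, zero_add, div_one, abs_neg,
    sub_neg_eq_add] at h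
  calc |log (1 + a) - a| = |-a + log (1 + a)| := by ring_nf
    _ ≤ |a| ^ 2 / (1 - |a|) := h
    _ ≤ |a| ^ 2 / (1 / 2) := by gcongr; linarith
    _ = 2 * a ^ 2 := by rw [sq_abs]; ring

lemma abs_logCentralBinomTerm_le (k : ℕ) {x : ℝ} (hx : |x| ≤ 1 / 2) :
    |logCentralBinomTerm k x| ≤ 1 / ((k : ℝ) + 1) ^ 2 := by
  have hk : (1 : ℝ) ≤ k + 1 := by linarith [k.cast_nonneg (α := ℝ)]
  set b := x / (2 * ((k : ℝ) + 1)) with hb_def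
  have hxb : x = 2 * ((k : ℝ) + 1) * b := by rw [hb_def]; field_simp
  have hb : |2 * b| ≤ 1 / 2 := by
    rw [abs_mul, abs_two, abs_div, abs_of_pos (by positivity : (0 : ℝ) < 2 * (k + 1))]
    rw [mul_div_assoc', div_le_iff₀ (by positivity)]
    nlinarith
  have hb' : |b| ≤ 1 / 2 := by rw [abs_mul, abs_two] at hb; linarith [abs_nonneg b]
  have h2b : x / ((k : ℝ) + 1) = 2 * b := by rw [hxb]; field_simp
  have hx2 : x ^ 2 ≤ 1 / 4 := by nlinarith [sq_abs x, abs_nonneg x]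
  calc |logCentralBinomTerm k x|
      = |2 * (log (1 + b) - b) - (log (1 + 2 * b) - 2 * b)| := by
        simp only [logCentralBinomTerm, ← hb_def, h2b]
        ring_nf
    _ ≤ 2 * (2 * b ^ 2) + 2 * (2 * b) ^ 2 := by
        refine (abs_sub _ _).trans ?_
        rw [abs_mul, abs_two]
        gcongr
        · exact abs_log_one_add_sub_self_le hb'
        · exact abs_log_one_add_sub_self_le hb
    _ = 3 * x ^ 2 / ((k : ℝ) + 1) ^ 2 := by rw [hxb]; field_simp; ring
    _ ≤ 1 / ((k : ℝ) + 1) ^ 2 := by gcongr; linarith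

lemma hasDerivAt_logCentralBinomTerm (k : ℕ) {x : ℝ} (hx : -1 < x) :
    HasDerivAt (logCentralBinomTerm k) (hurwitzDiffTerm 1 k x) x := by
  have hk : (1 : ℝ) ≤ k + 1 := by linarith [k.cast_nonneg (α := ℝ)]
  have h₁ : 1 + x / (2 * ((k : ℝ) + 1)) ≠ 0 := by
    have : -1 < x / (2 * ((k : ℝ) + 1)) := by rw [lt_div_iff₀ (by positivity)]; linarith
    linarith
  have h₂ : 1 + x / ((k : ℝ) + 1) ≠ 0 := by
    have : -1 < x / ((k : ℝ) + 1) := by rw [lt_div_iff₀ (by positivity)]; linarith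
    linarith
  have hd₁ := ((hasDerivAt_id' x).div_const (2 * ((k : ℝ) + 1))).const_add 1
  have hd₂ := ((hasDerivAt_id' x).div_const ((k : ℝ) + 1)).const_add 1
  refine (((hd₁.log h₁).const_mul 2).fun_sub (hd₂.log h₂)).congr_deriv ?_
  have : 2 * ((k : ℝ) + 1) + x ≠ 0 := by linarith
  have : (k : ℝ) + 1 + x ≠ 0 := by linarith
  simp only [hurwitzDiffTerm, pow_one]
  field_simp

lemma summable_logCentralBinomTerm {x : ℝ} (hx : |x| ≤ 1 / 2) :
    Summable fun k => logCentralBinomTerm k x :=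
  .of_norm_bounded (summable_one_div_nat_add_one_pow le_rfl) fun k =>
    abs_logCentralBinomTerm_le k hx

lemma hasDerivAt_logCentralBinom {x : ℝ} (hx : x ∈ Ioo (-(1 / 2) : ℝ) (1 / 2)) :
    HasDerivAt logCentralBinom (hurwitzDiff 1 x) x :=
  hasDerivAt_tsum_of_isPreconnected (summable_one_div_nat_add_one_pow le_rfl) isOpen_Ioo
    isPreconnected_Ioo (fun k y hy => hasDerivAt_logCentralBinomTerm k (by linarith [hy.1]))
    (fun k y hy => abs_hurwitzDiffTerm_one_le k (abs_le.mpr ⟨hy.1.le, hy.2.le⟩)) hx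
    (summable_logCentralBinomTerm (abs_le.mpr ⟨hx.1.le, hx.2.le⟩)) hx

lemma sum_range_log_nat_add_one (n : ℕ) :
    ∑ k ∈ Finset.range n, log ((k : ℝ) + 1) = log n.factorial := by
  induction n with
  | zero => simp
  | succ n ih =>
    rw [Finset.sum_range_succ, ih, Nat.factorial_succ, Nat.cast_mul,
      log_mul (by positivity) (by positivity)]
    push_cast
    ring

lemma sum_range_logCentralBinomTerm {x : ℝ} (hx : -1 < x) (n : ℕ) :
    ∑ k ∈ Finset.range (n + 1), logCentralBinomTerm k x =
      BohrMollerup.logGammaSeq (1 + x) n - 2 * BohrMollerup.logGammaSeq (1 + x / 2) n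
        - (log (n + 1) - log n) := by
  have hterm (k : ℕ) : logCentralBinomTerm k x =
      2 * log (1 + x / 2 + k) - log (1 + x + k) - log ((k : ℝ) + 1) := by
    have hk : (0 : ℝ) ≤ k := k.cast_nonneg
    have h₁ : 1 + x / (2 * ((k : ℝ) + 1)) = (1 + x / 2 + k) / (k + 1) := by field_simp; ring
    have h₂ : 1 + x / ((k : ℝ) + 1) = (1 + x + k) / (k + 1) := by field_simp; ring
    rw [logCentralBinomTerm, h₁, h₂, log_div (by linarith) (by positivity),
      log_div (by linarith) (by positivity)]
    ring
  simp only [hterm, Finset.sum_sub_distrib, ← Finset.mul_sum, BohrMollerup.logGammaSeq,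
    Finset.sum_range_succ (fun k => log ((k : ℝ) + 1)), sum_range_log_nat_add_one]
  ring

lemma logCentralBinom_eq {x : ℝ} (hx : |x| ≤ 1 / 2) :
    logCentralBinom x = log (Gamma (1 + x)) - 2 * log (Gamma (1 + x / 2)) := by
  obtain ⟨hx₁, -⟩ := abs_le.mp hx
  have hpartial := ((summable_logCentralBinomTerm hx).hasSum.tendsto_sum_nat).comp
    (tendsto_add_atTop_nat 1)
  have hlim := ((BohrMollerup.tendsto_log_gamma (by linarith : 0 < 1 + x)).sub
    ((BohrMollerup.tendsto_log_gamma (by linarith : 0 < 1 + x / 2)).const_mul 2)).sub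
    tendsto_log_nat_add_one_sub_log
  rw [sub_zero] at hlim
  refine tendsto_nhds_unique hpartial (hlim.congr fun n => ?_)
  exact (sum_range_logCentralBinomTerm (by linarith) n).symm

lemma integral_rpow_mul_one_sub_rpow {u v : ℝ} (hu : 0 < u) (hv : 0 < v) :
    ∫ t in (0 : ℝ)..1, t ^ (u - 1) * (1 - t) ^ (v - 1) = Gamma u * Gamma v / Gamma (u + v) := by
  have h := Complex.Gamma_mul_Gamma_eq_betaIntegral (s := u) (t := v)
    (by simpa using hu) (by simpa using hv)
  have hbeta : Complex.betaIntegral u v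
      = ((∫ t in (0 : ℝ)..1, t ^ (u - 1) * (1 - t) ^ (v - 1) : ℝ) : ℂ) := by
    rw [Complex.betaIntegral, ← intervalIntegral.integral_ofReal]
    refine intervalIntegral.integral_congr fun t ht => ?_
    rw [uIcc_of_le zero_le_one] at ht
    rw [Complex.ofReal_mul, Complex.ofReal_cpow ht.1, Complex.ofReal_cpow (by linarith [ht.2])]
    push_cast
    ring
  rw [hbeta, ← Complex.ofReal_add, Complex.Gamma_ofReal, Complex.Gamma_ofReal,
    Complex.Gamma_ofReal] at h
  rw [eq_div_iff (Gamma_pos_of_pos (add_pos hu hv)).ne']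
  rw [mul_comm]
  exact_mod_cast h.symm

lemma sin_half_pos {θ : ℝ} (h₀ : 0 < θ) (hπ : θ ≤ π) : 0 < sin (θ / 2) :=
  sin_pos_of_pos_of_lt_pi (by linarith) (by linarith [pi_pos])

lemma strictMonoOn_sin_half_sq : StrictMonoOn (fun θ => sin (θ / 2) ^ 2) (Ioo 0 π) := by
  intro a ha b hb hab
  have ha₀ := sin_half_pos ha.1 ha.2.le
  have hlt : sin (a / 2) < sin (b / 2) :=
    sin_lt_sin_of_lt_of_le_pi_div_two (by linarith [ha.1, pi_pos]) (by linarith [hb.2])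
      (by linarith)
  dsimp only
  gcongr

lemma image_sin_half_sq : (fun θ => sin (θ / 2) ^ 2) '' Ioo 0 π = Ioo 0 1 := by
  have hcont : Continuous fun θ => sin (θ / 2) ^ 2 := by fun_prop
  refine Subset.antisymm ?_ ?_
  · rintro _ ⟨θ, hθ, rfl⟩
    have h₀ := sin_half_pos hθ.1 hθ.2.le
    have h₁ : sin (θ / 2) < 1 := by
      simpa using sin_lt_sin_of_lt_of_le_pi_div_two (by linarith [hθ.1, pi_pos]) le_rfl
        (by linarith [hθ.2])
    exact ⟨by positivity, by nlinarith⟩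
  · simpa using intermediate_value_Ioo pi_pos.le hcont.continuousOn

lemma integral_sin_half_rpow (x : ℝ) :
    ∫ θ in (0 : ℝ)..π, sin (θ / 2) ^ x
      = ∫ t in (0 : ℝ)..1, t ^ ((x + 1) / 2 - 1) * (1 - t) ^ ((1 : ℝ) / 2 - 1) := by
  have hderiv (θ : ℝ) : HasDerivWithinAt (fun θ => sin (θ / 2) ^ 2)
      (sin (θ / 2) * cos (θ / 2)) (Ioo 0 π) θ := by
    refine ((((hasDerivAt_id' θ).div_const 2).sin.fun_pow 2).congr_deriv ?_).hasDerivWithinAt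
    norm_num
    ring
  have key := integral_image_eq_integral_abs_deriv_smul measurableSet_Ioo
    (fun θ _ => hderiv θ) strictMonoOn_sin_half_sq.injOn
    (fun t => t ^ ((x + 1) / 2 - 1) * (1 - t) ^ ((1 : ℝ) / 2 - 1))
  rw [image_sin_half_sq] at key
  rw [intervalIntegral.integral_of_le zero_le_one, intervalIntegral.integral_of_le pi_pos.le,
    integral_Ioc_eq_integral_Ioo, integral_Ioc_eq_integral_Ioo, key]
  refine setIntegral_congr_fun measurableSet_Ioo fun θ hθ => ?_
  have hs := sin_half_pos hθ.1 hθ.2.le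
  have hc : 0 < cos (θ / 2) :=
    cos_pos_of_mem_Ioo ⟨by linarith [hθ.1, pi_pos], by linarith [hθ.2]⟩
  have h₁ : (sin (θ / 2) ^ 2) ^ ((x + 1) / 2 - 1) = sin (θ / 2) ^ x / sin (θ / 2) := by
    rw [← rpow_natCast, ← rpow_mul hs.le, ← rpow_sub_one hs.ne']
    congr 1
    push_cast
    ring
  have h₂ : (1 - sin (θ / 2) ^ 2) ^ ((1 : ℝ) / 2 - 1) = (cos (θ / 2))⁻¹ := by
    rw [← cos_sq', ← rpow_natCast, ← rpow_mul hc.le]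
    norm_num [rpow_neg_one]
  rw [h₁, h₂, smul_eq_mul, abs_of_pos (by positivity)]
  field_simp

lemma integral_two_mul_sin_half_rpow {x : ℝ} (hx : -1 < x) :
    ∫ θ in (0 : ℝ)..π, (2 * sin (θ / 2)) ^ x
      = π * (Gamma (1 + x) / Gamma (1 + x / 2) ^ 2) := by
  have hfactor : ∫ θ in (0 : ℝ)..π, (2 * sin (θ / 2)) ^ x
      = 2 ^ x * ∫ θ in (0 : ℝ)..π, sin (θ / 2) ^ x := by
    rw [← intervalIntegral.integral_const_mul]
    refine intervalIntegral.integral_congr fun θ hθ => ?_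
    rw [uIcc_of_le pi_pos.le] at hθ
    exact mul_rpow zero_le_two
      (sin_nonneg_of_nonneg_of_le_pi (by linarith [hθ.1]) (by linarith [hθ.2, pi_pos]))
  have hbeta : ∫ θ in (0 : ℝ)..π, sin (θ / 2) ^ x
      = Gamma ((x + 1) / 2) * √π / Gamma (1 + x / 2) := by
    rw [integral_sin_half_rpow, integral_rpow_mul_one_sub_rpow (by linarith) one_half_pos,
      Gamma_one_half_eq]
    ring_nf
  have hdup : Gamma ((x + 1) / 2) * Gamma (1 + x / 2) = Gamma (1 + x) * 2 ^ (-x) * √π := by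
    convert Gamma_mul_Gamma_add_half ((x + 1) / 2) using 2 <;> ring_nf
  have h2 : (2 : ℝ) ^ x * 2 ^ (-x) = 1 := by rw [← rpow_add two_pos]; simp
  have hG : Gamma (1 + x / 2) ≠ 0 := (Gamma_pos_of_pos (by linarith)).ne'
  rw [hfactor, hbeta]
  calc 2 ^ x * (Gamma ((x + 1) / 2) * √π / Gamma (1 + x / 2))
      = 2 ^ x * (Gamma ((x + 1) / 2) * Gamma (1 + x / 2)) * √π / Gamma (1 + x / 2) ^ 2 := by
        field_simp
    _ = (2 ^ x * 2 ^ (-x)) * (√π * √π) * (Gamma (1 + x) / Gamma (1 + x / 2) ^ 2) := by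
        rw [hdup]; ring
    _ = π * (Gamma (1 + x) / Gamma (1 + x / 2) ^ 2) := by
        rw [h2, mul_self_sqrt pi_pos.le, one_mul]

def logSineMoment (k : ℕ) (x : ℝ) : ℝ :=
  ∫ θ in (0 : ℝ)..π, log (2 * sin (θ / 2)) ^ k * (2 * sin (θ / 2)) ^ x

lemma abs_log_pow_mul_rpow_le (m : ℕ) {c : ℝ} (hc₀ : 0 < c) (hc₁ : c ≤ 1) :
    |log c| ^ m * c ^ (1 / 4 : ℝ) ≤ (4 * m) ^ m := by
  rcases Nat.eq_zero_or_pos m with rfl | hm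
  · simpa using rpow_le_one hc₀.le hc₁ (by norm_num)
  have hm' : (0 : ℝ) < 4 * m := by positivity
  have h := abs_log_mul_self_rpow_lt c (1 / (4 * m)) hc₀ hc₁ (by positivity)
  rw [one_div_one_div, abs_mul, abs_of_pos (rpow_pos_of_pos hc₀ _)] at h
  calc |log c| ^ m * c ^ (1 / 4 : ℝ) = (|log c| * c ^ (1 / (4 * m) : ℝ)) ^ m := by
        rw [mul_pow, ← rpow_natCast (c ^ _), ← rpow_mul hc₀.le]
        field_simp
    _ ≤ (4 * m) ^ m := by gcongr

/-- Any exponent in `(-1, -1/2)` would do: it must absorb `c ^ y` and stay integrable at `0`. -/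
lemma abs_log_pow_mul_rpow_le_rpow (m : ℕ) {c y : ℝ} (hc₀ : 0 < c) (hc₂ : c ≤ 2)
    (hy : |y| ≤ 1 / 2) : |log c| ^ m * c ^ y ≤ ((4 * m) ^ m + 4) * c ^ (-3 / 4 : ℝ) := by
  obtain ⟨hy₁, hy₂⟩ := abs_le.mp hy
  have hpos : 0 < c ^ (-3 / 4 : ℝ) := rpow_pos_of_pos hc₀ _
  rcases le_total c 1 with hc₁ | hc₁
  · calc |log c| ^ m * c ^ y ≤ |log c| ^ m * c ^ (-1 / 2 : ℝ) :=
          mul_le_mul_of_nonneg_left (rpow_le_rpow_of_exponent_ge hc₀ hc₁ (by linarith))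
            (by positivity)
      _ = |log c| ^ m * c ^ (1 / 4 : ℝ) * c ^ (-3 / 4 : ℝ) := by
          rw [mul_assoc, ← rpow_add hc₀]; norm_num
      _ ≤ ((4 * m) ^ m + 4) * c ^ (-3 / 4 : ℝ) := by
          gcongr
          exact (abs_log_pow_mul_rpow_le m hc₀ hc₁).trans (by linarith)
  · have hlog : |log c| ≤ 1 := by
      rw [abs_of_nonneg (log_nonneg hc₁)]
      linarith [log_le_sub_one_of_pos hc₀]
    have hrpow : c ^ y ≤ 2 := by
      calc c ^ y ≤ c ^ (1 : ℝ) := rpow_le_rpow_of_exponent_le hc₁ (by linarith)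
        _ ≤ 2 := by rwa [rpow_one]
    have hinv : 1 / 2 ≤ c ^ (-3 / 4 : ℝ) := by
      calc 1 / 2 ≤ c ^ (-1 : ℝ) := by rw [rpow_neg_one, one_div]; exact inv_anti₀ hc₀ hc₂
        _ ≤ c ^ (-3 / 4 : ℝ) := rpow_le_rpow_of_exponent_le hc₁ (by norm_num)
    calc |log c| ^ m * c ^ y ≤ 1 * 2 :=
          mul_le_mul (pow_le_one₀ (abs_nonneg _) hlog) hrpow (by positivity) zero_le_one
      _ ≤ ((4 * m) ^ m + 4) * c ^ (-3 / 4 : ℝ) := by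
          nlinarith [pow_nonneg (by positivity : (0 : ℝ) ≤ 4 * m) m]

lemma half_le_two_mul_sin_half {t : ℝ} (ht₀ : 0 ≤ t) (htπ : t ≤ π) :
    t / 2 ≤ 2 * sin (t / 2) := by
  have h := mul_le_sin (by linarith : 0 ≤ t / 2) (by linarith)
  rw [div_mul_div_comm, div_le_iff₀ (by positivity)] at h
  nlinarith [pi_le_four, sin_nonneg_of_nonneg_of_le_pi (by linarith : 0 ≤ t / 2) (by linarith)]

lemma norm_log_pow_mul_rpow_le (m : ℕ) {t y : ℝ} (ht : t ∈ Ioc 0 π) (hy : |y| ≤ 1 / 2) :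
    ‖log (2 * sin (t / 2)) ^ m * (2 * sin (t / 2)) ^ y‖
      ≤ 2 * ((4 * m) ^ m + 4) * t ^ (-3 / 4 : ℝ) := by
  obtain ⟨ht₀, htπ⟩ := ht
  have hc := half_le_two_mul_sin_half ht₀.le htπ
  have hc₀ : 0 < 2 * sin (t / 2) := by linarith
  have hc₂ : 2 * sin (t / 2) ≤ 2 := by linarith [sin_le_one (t / 2)]
  have htwo : (t / 2) ^ (-3 / 4 : ℝ) ≤ 2 * t ^ (-3 / 4 : ℝ) := by
    rw [div_rpow ht₀.le zero_le_two, div_eq_mul_inv, ← rpow_neg zero_le_two, mul_comm]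
    gcongr
    calc (2 : ℝ) ^ (-(-3 / 4) : ℝ) ≤ 2 ^ (1 : ℝ) :=
          rpow_le_rpow_of_exponent_le one_le_two (by norm_num)
      _ = 2 := rpow_one 2
  rw [norm_mul, norm_pow, Real.norm_eq_abs, Real.norm_eq_abs, abs_of_pos (rpow_pos_of_pos hc₀ y)]
  calc |log (2 * sin (t / 2))| ^ m * (2 * sin (t / 2)) ^ y
      ≤ ((4 * m) ^ m + 4) * (2 * sin (t / 2)) ^ (-3 / 4 : ℝ) :=
        abs_log_pow_mul_rpow_le_rpow m hc₀ hc₂ hy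
    _ ≤ ((4 * m) ^ m + 4) * (t / 2) ^ (-3 / 4 : ℝ) :=
        mul_le_mul_of_nonneg_left (rpow_le_rpow_of_nonpos (by positivity) hc (by norm_num))
          (by positivity)
    _ ≤ 2 * ((4 * m) ^ m + 4) * t ^ (-3 / 4 : ℝ) := by
        rw [mul_comm 2, mul_assoc]
        gcongr

lemma aestronglyMeasurable_log_pow_mul_rpow (k : ℕ) (y : ℝ) :
    AEStronglyMeasurable (fun t => log (2 * sin (t / 2)) ^ k * (2 * sin (t / 2)) ^ y)
      (volume.restrict (uIoc 0 π)) := by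
  have hpos (t : ℝ) (ht : t ∈ Ioc 0 π) : 2 * sin (t / 2) ≠ 0 :=
    (mul_pos two_pos (sin_half_pos ht.1 ht.2)).ne'
  have hsin : ContinuousOn (fun t => 2 * sin (t / 2)) (Ioc 0 π) := by fun_prop
  rw [uIoc_of_le pi_pos.le]
  exact (((hsin.log hpos).pow k).mul (hsin.rpow_const fun t ht => .inl (hpos t ht)))
    |>.aestronglyMeasurable measurableSet_Ioc

lemma intervalIntegrable_log_pow_mul_rpow (k : ℕ) {y : ℝ} (hy : |y| ≤ 1 / 2) :
    IntervalIntegrable (fun t => log (2 * sin (t / 2)) ^ k * (2 * sin (t / 2)) ^ y) volume 0 π :=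
  ((intervalIntegrable_rpow' (r := -3 / 4) (by norm_num)).const_mul _).mono_fun
    (aestronglyMeasurable_log_pow_mul_rpow k y) <| by
      rw [EventuallyLE, ae_restrict_iff' measurableSet_uIoc]
      refine .of_forall fun t ht => ?_
      rw [uIoc_of_le pi_pos.le] at ht
      exact (norm_log_pow_mul_rpow_le k ht hy).trans (le_abs_self _)

lemma hasDerivAt_logSineMoment (k : ℕ) {x : ℝ} (hx : x ∈ Ioo (-(1 / 2) : ℝ) (1 / 2)) :
    HasDerivAt (logSineMoment k) (logSineMoment (k + 1) x) x := by
  have habs {y : ℝ} (hy : y ∈ Ioo (-(1 / 2) : ℝ) (1 / 2)) : |y| ≤ 1 / 2 :=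
    abs_le.mpr ⟨hy.1.le, hy.2.le⟩
  refine (intervalIntegral.hasDerivAt_integral_of_dominated_loc_of_deriv_le
    (F' := fun y t => log (2 * sin (t / 2)) ^ (k + 1) * (2 * sin (t / 2)) ^ y)
    (isOpen_Ioo.mem_nhds hx) (.of_forall fun y => aestronglyMeasurable_log_pow_mul_rpow k y)
    (intervalIntegrable_log_pow_mul_rpow k (habs hx))
    (aestronglyMeasurable_log_pow_mul_rpow (k + 1) x)
    (.of_forall fun t ht y hy => ?_)
    ((intervalIntegrable_rpow' (r := -3 / 4) (by norm_num)).const_mul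
      (2 * ((4 * ((k + 1 : ℕ) : ℝ)) ^ (k + 1) + 4)))
    (.of_forall fun t ht y _ => ?_)).2
  · rw [uIoc_of_le pi_pos.le] at ht
    exact norm_log_pow_mul_rpow_le (k + 1) ht (habs hy)
  · rw [uIoc_of_le pi_pos.le] at ht
    have hc : 0 < 2 * sin (t / 2) := mul_pos two_pos (sin_half_pos ht.1 ht.2)
    refine ((hasStrictDerivAt_const_rpow hc y).hasDerivAt.const_mul
      (log (2 * sin (t / 2)) ^ k)).congr_deriv ?_
    ring

end

section

open Finset

/-- Leibniz's rule for `F' = g F`, with `F k` and `g i` in the roles of `F^{(k)}` and `g^{(i)}`. -/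
theorem eq_sum_antidiagonal_choose_mul_of_hasDerivAt {s : Set ℝ} (hs : IsOpen s)
    {F g : ℕ → ℝ → ℝ} (hF : ∀ k, ∀ x ∈ s, HasDerivAt (F k) (F (k + 1) x) x)
    (hg : ∀ i, ∀ x ∈ s, HasDerivAt (g i) (g (i + 1) x) x)
    (h₁ : ∀ x ∈ s, F 1 x = g 0 x * F 0 x) (n : ℕ) {x : ℝ} (hx : x ∈ s) :
    F (n + 1) x = ∑ ij ∈ antidiagonal n, n.choose ij.1 * (g ij.1 x * F ij.2 x) := by
  induction n generalizing x with
  | zero => simpa using h₁ x hx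
  | succ n ih =>
    have hsum :
        HasDerivAt (fun y => ∑ ij ∈ antidiagonal n, n.choose ij.1 * (g ij.1 y * F ij.2 y))
        (∑ ij ∈ antidiagonal n,
          n.choose ij.1 * (g (ij.1 + 1) x * F ij.2 x + g ij.1 x * F (ij.2 + 1) x)) x :=
      HasDerivAt.fun_sum fun ij _ => ((hg _ x hx).mul (hF _ x hx)).const_mul _
    have hF' := hsum.congr_of_eventuallyEq (eventually_of_mem (hs.mem_nhds hx) fun y hy => ih hy)
    rw [(hF (n + 1) x hx).unique hF', sum_antidiagonal_choose_succ_mul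
      (fun i j => g i x * F j x) n]
    simp only [mul_add, sum_add_distrib]
    rw [add_comm]
    congr 1
    refine sum_congr rfl fun ij hij => ?_
    rw [Nat.choose_symm_of_eq_add (mem_antidiagonal.mp hij).symm]

lemma logSineMoment_zero_eq_pi_mul_exp {x : ℝ} (hx : |x| ≤ 1 / 2) :
    logSineMoment 0 x = π * exp (logCentralBinom x) := by
  obtain ⟨hx₁, -⟩ := abs_le.mp hx
  have hG₁ := Gamma_pos_of_pos (by linarith : 0 < 1 + x)
  have hG₂ := Gamma_pos_of_pos (by linarith : 0 < 1 + x / 2)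
  have hlog_sq : 2 * log (Gamma (1 + x / 2)) = log (Gamma (1 + x / 2) ^ 2) := by
    rw [log_pow]; push_cast; rfl
  simp only [logSineMoment, pow_zero, one_mul]
  rw [integral_two_mul_sin_half_rpow (by linarith), logCentralBinom_eq hx, hlog_sq,
    exp_sub, exp_log hG₁, exp_log (pow_pos hG₂ 2)]

lemma logSineMoment_one_eq_hurwitzDiff_mul {x : ℝ} (hx : x ∈ Set.Ioo (-(1 / 2) : ℝ) (1 / 2)) :
    logSineMoment 1 x = hurwitzDiff 1 x * logSineMoment 0 x := by
  have hexp := ((hasDerivAt_logCentralBinom hx).exp.const_mul π).congr_of_eventuallyEq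
    (eventually_of_mem (isOpen_Ioo.mem_nhds hx) fun y hy =>
      logSineMoment_zero_eq_pi_mul_exp (abs_le.mpr ⟨hy.1.le, hy.2.le⟩))
  rw [(hasDerivAt_logSineMoment 0 hx).unique hexp,
    logSineMoment_zero_eq_pi_mul_exp (abs_le.mpr ⟨hx.1.le, hx.2.le⟩)]
  ring

lemma hasDerivAt_neg_one_pow_mul_factorial_mul_hurwitzDiff (i : ℕ) {x : ℝ}
    (hx : x ∈ Set.Ioo (-(1 / 2) : ℝ) (1 / 2)) :
    HasDerivAt (fun y => (-1) ^ i * i.factorial * hurwitzDiff (i + 1) y)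
      ((-1) ^ (i + 1) * (i + 1).factorial * hurwitzDiff (i + 1 + 1) x) x := by
  refine ((hasDerivAt_hurwitzDiff i.succ_ne_zero hx).const_mul _).congr_deriv ?_
  push_cast [Nat.factorial_succ]
  ring

lemma logSineMoment_succ_eq_sum (n : ℕ) {x : ℝ} (hx : x ∈ Set.Ioo (-(1 / 2) : ℝ) (1 / 2)) :
    logSineMoment (n + 1) x = ∑ ij ∈ antidiagonal n, n.choose ij.1 *
      ((-1) ^ ij.1 * ij.1.factorial * hurwitzDiff (ij.1 + 1) x * logSineMoment ij.2 x) := by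
  refine eq_sum_antidiagonal_choose_mul_of_hasDerivAt (g := fun i y =>
      (-1) ^ i * i.factorial * hurwitzDiff (i + 1) y) isOpen_Ioo
    (fun k _ hy => hasDerivAt_logSineMoment k hy)
    (fun i _ hy => hasDerivAt_neg_one_pow_mul_factorial_mul_hurwitzDiff i hy) (fun _ hy => ?_) n hx
  simpa using logSineMoment_one_eq_hurwitzDiff_mul hy

lemma hurwitzDiff_one_zero : hurwitzDiff 1 0 = 0 := by
  simp [hurwitzDiff, hurwitzDiffTerm, div_mul_cancel_left₀]

lemma logSineMoment_five_zero :
    logSineMoment 5 0 = π * (24 * hurwitzDiff 5 0 - 20 * hurwitzDiff 2 0 * hurwitzDiff 3 0) := by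
  have h (n : ℕ) := logSineMoment_succ_eq_sum n (x := 0) (by norm_num)
  have h₀ : logSineMoment 0 0 = π := by simp [logSineMoment]
  have h₁ := h 0
  have h₂ := h 1
  have h₃ := h 2
  have h₅ := h 4
  norm_num [Nat.sum_antidiagonal_eq_sum_range_succ_mk, sum_range_succ, Nat.choose, Nat.factorial,
    hurwitzDiff_one_zero, h₀] at h₁ h₂ h₃ h₅
  -- `logSineMoment 4 0` does not occur: its coefficient is `hurwitzDiff 1 0 = 0`.
  rw [h₅, h₃, h₂, h₁]
  ring

end

lemma ofReal_hurwitzDiff_zero {j : ℕ} (hj : 2 ≤ j) :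
    (hurwitzDiff j 0 : ℂ) = (2 / 2 ^ j - 1) * riemannZeta j := by
  have hterm (k : ℕ) : hurwitzDiffTerm j k 0 = (2 / 2 ^ j - 1) * (1 / ((k : ℝ) + 1) ^ j) := by
    simp only [hurwitzDiffTerm, add_zero, mul_pow]
    field_simp
  have hre : 1 < (j : ℂ).re := by simp only [Complex.natCast_re]; exact_mod_cast hj
  simp only [hurwitzDiff, hterm, tsum_mul_left, zeta_eq_tsum_one_div_nat_add_one_cpow hre,
    Complex.cpow_natCast]
  push_cast [Complex.ofReal_tsum]
  rfl

end LogSine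

open LogSine

theorem ls6_pi :
    ((∫ θ in (0:ℝ)..π, (Real.log (2 * Real.sin (θ/2)))^5 : ℝ) : ℂ) =
      -(45/2) * (π : ℂ) * riemannZeta 5 - (5/4) * (π : ℂ)^3 * riemannZeta 3 := by
  have hmoment : ∫ θ in (0:ℝ)..π, (Real.log (2 * Real.sin (θ/2)))^5 = logSineMoment 5 0 := by
    simp [logSineMoment]
  rw [hmoment, logSineMoment_five_zero]
  push_cast
  rw [ofReal_hurwitzDiff_zero (j := 5) (by norm_num),
    ofReal_hurwitzDiff_zero (j := 3) (by norm_num), ofReal_hurwitzDiff_zero (j := 2) le_rfl]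
  push_cast
  rw [riemannZeta_two]
  ring
end
end

section
/- The generating function identity $-\sum_{m=0}^\infty \mathrm{Ls}_{m+1}(\pi)\frac{x^m}{m!} = \pi\frac{\Gamma(1+x)}{\Gamma(1+x/2)^2}$ holds for real $x$ with $|x|<1$, where $\mathrm{Ls}_{m+1}(\pi) = -\int_0^\pi \log^m(2\sin(\theta/2))\,d\theta$. -/
/-!
Writing `(2 sin (θ/2))^x = exp (x log (2 sin (θ/2)))` and expanding the exponential, the series is
`∫₀^π (2 sin (θ/2))^x dθ`; the interchange of sum and integral is justified by dominated
convergence, since `exp (|x| |log (2 sin (θ/2))|) ≤ 2^|x| + (2θ/π)^(-|x|)` is integrable for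
`|x| < 1` (Jordan's inequality). The substitution `t = sin² (θ/2)` turns the integral into
`2^x B((x+1)/2, 1/2)`, and Legendre's duplication formula rewrites this as
`π Γ(1+x) / Γ(1+x/2)²`.
-/

open Real MeasureTheory Set
open scoped Nat

theorem hasSum_pow_div_factorial_exp (y : ℝ) : HasSum (fun m : ℕ => y ^ m / m !) (exp y) := by
  rw [exp_eq_exp_ℝ]
  exact NormedSpace.expSeries_div_hasSum_exp y

theorem hasSum_integral_pow_mul_pow_div_factorial {α : Type*} [MeasurableSpace α]
    {μ : Measure α} {f : α → ℝ} (hf : AEStronglyMeasurable f μ) {x : ℝ}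
    (hexp : Integrable (fun a => exp (|x| * |f a|)) μ) :
    HasSum (fun m : ℕ => (∫ a, f a ^ m ∂μ) * x ^ m / m !) (∫ a, exp (x * f a) ∂μ) := by
  have h := hasSum_integral_of_dominated_convergence
    (F := fun m a => (x * f a) ^ m / m !) (bound := fun m a => (|x| * |f a|) ^ m / m !)
    (fun m => by fun_prop)
    (fun m => ae_of_all _ fun a => by simp)
    (ae_of_all _ fun a => (hasSum_pow_div_factorial_exp _).summable)
    (by simpa only [(hasSum_pow_div_factorial_exp _).tsum_eq] using hexp)
    (ae_of_all _ fun a => hasSum_pow_div_factorial_exp _)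
  have hterm (m : ℕ) :
      ∫ a, (x * f a) ^ m / m ! ∂μ = (∫ a, f a ^ m ∂μ) * x ^ m / m ! := by
    simp_rw [mul_pow, integral_div, integral_const_mul]
    ring
  simpa only [hterm] using h

theorem exp_mul_abs_log_le {s a b t : ℝ} (hs : 0 ≤ s) (ha : 0 < a) (hat : a ≤ t)
    (htb : t ≤ b) : exp (s * |log t|) ≤ b ^ s + a ^ (-s) := by
  have ht : 0 < t := ha.trans_le hat
  calc exp (s * |log t|) ≤ exp (log t * s) + exp (log t * -s) := by
        rcases le_total 0 (log t) with h | h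
        · rw [abs_of_nonneg h, mul_comm]
          exact le_add_of_nonneg_right (exp_pos _).le
        · rw [abs_of_nonpos h, mul_neg, mul_comm, ← mul_neg]
          exact le_add_of_nonneg_left (exp_pos _).le
    _ = t ^ s + t ^ (-s) := by rw [rpow_def_of_pos ht, rpow_def_of_pos ht]
    _ ≤ b ^ s + a ^ (-s) :=
        add_le_add (rpow_le_rpow ht.le htb hs) (rpow_le_rpow_of_nonpos ha hat (neg_nonpos.2 hs))

theorem sin_half_pos {θ : ℝ} (h0 : 0 < θ) (h2π : θ < 2 * π) : 0 < sin (θ / 2) :=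
  sin_pos_of_pos_of_lt_pi (by positivity) (by linarith)

theorem integrableOn_exp_mul_abs_log_two_mul_sin_half {s : ℝ} (hs0 : 0 ≤ s) (hs1 : s < 1) :
    IntegrableOn (fun θ => exp (s * |log (2 * sin (θ / 2))|)) (Ioc 0 π) := by
  have hbound : IntegrableOn (fun θ : ℝ => 2 ^ s + (2 / π) ^ (-s) * θ ^ (-s)) (Ioc 0 π) :=
    (integrable_const _).add
      ((intervalIntegral.intervalIntegrable_rpow' (by linarith) (a := 0) (b := π)).1.const_mul _)
  refine hbound.mono' (Measurable.aestronglyMeasurable (by fun_prop))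
    (ae_restrict_of_forall_mem measurableSet_Ioc fun θ hθ => ?_)
  rw [norm_of_nonneg (exp_pos _).le, ← mul_rpow (by positivity) hθ.1.le]
  have hjordan := mul_le_sin (x := θ / 2) (by linarith [hθ.1]) (by linarith [hθ.2])
  refine exp_mul_abs_log_le hs0 (by have := hθ.1; positivity) ?_
    (by linarith [sin_le_one (θ / 2)])
  linarith

theorem hasSum_integral_log_two_mul_sin_half_pow {x : ℝ} (hx : |x| < 1) :
    HasSum (fun m : ℕ => (∫ θ in (0:ℝ)..π, log (2 * sin (θ / 2)) ^ m) * x ^ m / m !)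
      (∫ θ in (0:ℝ)..π, (2 * sin (θ / 2)) ^ x) := by
  simp only [intervalIntegral.integral_of_le pi_pos.le]
  have h := hasSum_integral_pow_mul_pow_div_factorial (μ := volume.restrict (Ioc 0 π))
    (f := fun θ => log (2 * sin (θ / 2))) (Measurable.aestronglyMeasurable (by fun_prop))
    (integrableOn_exp_mul_abs_log_two_mul_sin_half (abs_nonneg x) hx)
  rwa [setIntegral_congr_fun measurableSet_Ioc fun θ hθ => by
    rw [rpow_def_of_pos (by linarith [sin_half_pos hθ.1 (by linarith [hθ.2, pi_pos])]),
      mul_comm]]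

theorem integral_rpow_mul_one_sub_rpow {a b : ℝ} (ha : 0 < a) (hb : 0 < b) :
    ∫ t in (0:ℝ)..1, t ^ (a - 1) * (1 - t) ^ (b - 1) = Gamma a * Gamma b / Gamma (a + b) := by
  have hbeta :
      Complex.betaIntegral a b = ↑(∫ t in (0:ℝ)..1, t ^ (a - 1) * (1 - t) ^ (b - 1)) := by
    rw [Complex.betaIntegral, ← intervalIntegral.integral_ofReal]
    refine intervalIntegral.integral_congr fun t ht => ?_
    rw [uIcc_of_le zero_le_one] at ht
    push_cast
    rw [Complex.ofReal_cpow ht.1, Complex.ofReal_cpow (sub_nonneg.mpr ht.2)]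
    push_cast
    ring_nf
  have h := Complex.Gamma_mul_Gamma_eq_betaIntegral (s := a) (t := b) (by simpa) (by simpa)
  rw [hbeta, ← Complex.ofReal_add, Complex.Gamma_ofReal, Complex.Gamma_ofReal,
    Complex.Gamma_ofReal] at h
  rw [eq_div_iff (Gamma_pos_of_pos (add_pos ha hb)).ne', mul_comm]
  exact_mod_cast h.symm

theorem integral_sin_rpow_mul_cos_rpow {a b : ℝ} (ha : 0 < a) (hb : 0 < b) :
    ∫ θ in (0:ℝ)..π/2, sin θ ^ (2 * a - 1) * cos θ ^ (2 * b - 1)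
      = Gamma a * Gamma b / (2 * Gamma (a + b)) := by
  have hsubst := intervalIntegral.integral_comp_mul_deriv_of_deriv_nonneg
    (f := fun θ => sin θ ^ 2) (f' := fun θ => 2 * sin θ * cos θ)
    (g := fun t => t ^ (a - 1) * (1 - t) ^ (b - 1)) (a := 0) (b := π/2)
    (by fun_prop) (fun θ _ => by simpa using! (hasDerivAt_sin θ).pow 2)
    (fun θ hθ => by
      rw [min_eq_left (by positivity), max_eq_right (by positivity)] at hθ
      have := sin_nonneg_of_nonneg_of_le_pi hθ.1.le (by linarith [hθ.2, pi_pos])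
      have := cos_nonneg_of_mem_Icc ⟨by linarith [hθ.1, pi_pos], hθ.2.le⟩
      positivity)
  have hintegrand : ∫ θ in (0:ℝ)..π/2, (sin θ ^ 2) ^ (a - 1) * (1 - sin θ ^ 2) ^ (b - 1)
        * (2 * sin θ * cos θ)
      = 2 * ∫ θ in (0:ℝ)..π/2, sin θ ^ (2 * a - 1) * cos θ ^ (2 * b - 1) := by
    rw [← intervalIntegral.integral_const_mul]
    -- at `θ = π/2` the right side is `0 ^ (2 * b - 1)`, which is `1` when `b = 1/2`
    have hne : ∀ᵐ θ : ℝ, θ ≠ π/2 := by simp [ae_iff, measure_singleton]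
    refine intervalIntegral.integral_congr_ae (hne.mono fun θ hne hθ => ?_)
    rw [uIoc_of_le (by positivity)] at hθ
    have hs : 0 < sin θ := sin_pos_of_pos_of_lt_pi hθ.1 (by linarith [hθ.2, pi_pos])
    have hc : 0 < cos θ := cos_pos_of_mem_Ioo ⟨by linarith [hθ.1, pi_pos], hθ.2.lt_of_ne hne⟩
    rw [← cos_sq', ← Nat.cast_ofNat, ← rpow_natCast_mul hs.le, ← rpow_natCast_mul hc.le,
      show 2 * a - 1 = 2 * (a - 1) + 1 by ring, show 2 * b - 1 = 2 * (b - 1) + 1 by ring,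
      rpow_add_one hs.ne', rpow_add_one hc.ne']
    push_cast
    ring
  norm_num [Function.comp_def] at hsubst
  rw [hintegrand, integral_rpow_mul_one_sub_rpow ha hb] at hsubst
  rw [mul_comm 2 (Gamma (a + b)), ← div_div, ← hsubst]
  ring

theorem integral_two_mul_sin_half_rpow {x : ℝ} (hx : -1 < x) :
    ∫ θ in (0:ℝ)..π, (2 * sin (θ / 2)) ^ x
      = π * Gamma (1 + x) / Gamma (1 + x / 2) ^ 2 := by
  have hsin : ∫ θ in (0:ℝ)..π/2, sin θ ^ x
      = Gamma ((x + 1) / 2) * √π / (2 * Gamma (1 + x / 2)) := by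
    have h := integral_sin_rpow_mul_cos_rpow (a := (x + 1) / 2) (b := 1 / 2) (by linarith)
      (by norm_num)
    rw [show 2 * ((x + 1) / 2) - 1 = x by ring, show 2 * (1 / 2 : ℝ) - 1 = 0 by norm_num,
      show (x + 1) / 2 + 1 / 2 = 1 + x / 2 by ring, Gamma_one_half_eq] at h
    simpa only [rpow_zero, mul_one] using h
  have hdup := Gamma_mul_Gamma_add_half ((x + 1) / 2)
  rw [show (x + 1) / 2 + 1 / 2 = 1 + x / 2 by ring, show 2 * ((x + 1) / 2) = 1 + x by ring,
    show 1 - (1 + x) = -x by ring] at hdup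
  calc ∫ θ in (0:ℝ)..π, (2 * sin (θ / 2)) ^ x
      = ∫ θ in (0:ℝ)..π, 2 ^ x * sin (θ / 2) ^ x := by
        refine intervalIntegral.integral_congr fun θ hθ => ?_
        rw [uIcc_of_le pi_pos.le] at hθ
        exact mul_rpow zero_le_two (sin_nonneg_of_nonneg_of_le_pi (by linarith [hθ.1])
          (by linarith [hθ.2, pi_pos]))
    _ = 2 ^ x * (2 * ∫ θ in (0:ℝ)..π/2, sin θ ^ x) := by
        rw [intervalIntegral.integral_const_mul,
          intervalIntegral.integral_comp_div (fun θ => sin θ ^ x) two_ne_zero]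
        simp
    _ = π * Gamma (1 + x) / Gamma (1 + x / 2) ^ 2 := by
        have hG : 0 < Gamma (1 + x / 2) := Gamma_pos_of_pos (by linarith)
        rw [hsin, eq_div_iff (pow_ne_zero 2 hG.ne')]
        calc 2 ^ x * (2 * (Gamma ((x + 1) / 2) * √π / (2 * Gamma (1 + x / 2))))
              * Gamma (1 + x / 2) ^ 2
            = 2 ^ x * √π * (Gamma ((x + 1) / 2) * Gamma (1 + x / 2)) := by
              field_simp
          _ = (2 ^ x * 2 ^ (-x)) * (√π * √π) * Gamma (1 + x) := by rw [hdup]; ring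
          _ = π * Gamma (1 + x) := by
              rw [← rpow_add two_pos, add_neg_cancel, rpow_zero, mul_self_sqrt pi_pos.le,
                one_mul]

theorem ls_pi_generating_function (x : ℝ) (hx : |x| < 1) :
    -∑' m : ℕ, (-(∫ θ in (0:ℝ)..π, (Real.log (2 * Real.sin (θ/2)))^m)) * x^m / m.factorial
      = π * Real.Gamma (1 + x) / (Real.Gamma (1 + x/2))^2 := by
  simp only [neg_mul, neg_div, tsum_neg, neg_neg]
  rw [(hasSum_integral_log_two_mul_sin_half_pow hx).tsum_eq]
  exact integral_two_mul_sin_half_rpow (abs_lt.mp hx).1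
end

section
/- For every nonnegative integer $n$, $\frac{(-1)^{n+1}}{n!}\,\mathrm{Ls}_{n+1}(\pi/3) = \sum_{k=0}^\infty \frac{2^{-4k}}{(2k+1)^{n+1}}\binom{2k}{k}$, where $\mathrm{Ls}_{n+1}(\pi/3) = -\int_0^{\pi/3}\log^n(2\sin(\theta/2))\,d\theta$. -/
/-!
Substituting `x = 2 sin (θ / 2)` turns the integral into `∫₀¹ log x ^ n / √(1 - x² / 4) dx`.
Expanding `(1 - t)^(-1/2) = ∑ₖ C(2k, k) (t / 4)ᵏ` at `t = x² / 4` and integrating term by term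
against `∫₀¹ x^m (-log x)^n dx = n! / (m + 1)^(n + 1)` (put `x = e^(-t)` to get a Gamma integral)
gives the series.
-/

open Real Set MeasureTheory Polynomial

lemma Ring.multichoose_one_half (k : ℕ) :
    Ring.multichoose (1 / 2 : ℝ) k = k.centralBinom / 4 ^ k := by
  have hfac (k : ℕ) : (k.factorial : ℝ) * Ring.multichoose (1 / 2 : ℝ) k
      = (ascPochhammer ℝ k).eval (1 / 2) := by
    rw [← nsmul_eq_mul, Ring.factorial_nsmul_multichoose_eq_ascPochhammer,
      ascPochhammer_smeval_eq_eval]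
  induction k with
  | zero => simp
  | succ k ih =>
    have hrec := hfac (k + 1)
    rw [ascPochhammer_succ_eval, ← hfac k, ih, Nat.factorial_succ, Nat.cast_mul] at hrec
    have hcb : ((k + 1 : ℕ) : ℝ) * (k + 1).centralBinom = 2 * (2 * k + 1) * k.centralBinom := by
      exact_mod_cast Nat.succ_mul_centralBinom_succ k
    refine mul_left_cancel₀ (by positivity : ((k + 1 : ℕ) : ℝ) ≠ 0) ?_
    rw [mul_div_assoc', hcb, eq_div_iff (by positivity)]
    field_simp at hrec
    push_cast at hrec ⊢
    linear_combination 2 * hrec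

theorem hasSum_centralBinom_div_four_pow_mul_pow {t : ℝ} (ht : |t| < 1) :
    HasSum (fun k : ℕ => k.centralBinom / 4 ^ k * t ^ k) (√(1 - t))⁻¹ := by
  have h := (one_div_one_sub_rpow_hasFPowerSeriesOnBall_zero (1 / 2)).hasSum
    (y := t) (by simpa [enorm_eq_nnnorm, ← NNReal.coe_lt_coe] using ht)
  rw [zero_add, ← sqrt_eq_rpow, one_div (√(1 - t))] at h
  have hcoeff (k : ℕ) : FormalMultilinearSeries.ofScalars ℝ
      (fun n ↦ Ring.choose (1 / 2 + n - 1 : ℝ) n) k (fun _ ↦ t)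
        = k.centralBinom / 4 ^ k * t ^ k := by
    rw [FormalMultilinearSeries.ofScalars_apply_eq, smul_eq_mul, ← Ring.multichoose_eq,
      Ring.multichoose_one_half]
  simpa only [hcoeff] using h

theorem hasSum_centralBinom_div_sixteen_pow_mul_pow_two_mul {x : ℝ} (hx : |x| < 2) :
    HasSum (fun k : ℕ => k.centralBinom / 16 ^ k * x ^ (2 * k)) (√(1 - x ^ 2 / 4))⁻¹ := by
  have ht : |x ^ 2 / 4| < 1 := by
    rw [abs_of_nonneg (by positivity), div_lt_one four_pos, ← sq_abs]
    nlinarith [abs_nonneg x]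
  convert hasSum_centralBinom_div_four_pow_mul_pow ht using 2 with k
  rw [pow_mul, div_pow, show (16 : ℝ) ^ k = 4 ^ k * 4 ^ k by rw [← mul_pow]; norm_num]
  ring

lemma image_exp_neg_Ioi_zero : (fun t : ℝ => exp (-t)) '' Ioi 0 = Ioo 0 1 := by
  rw [show (fun t : ℝ => exp (-t)) = exp ∘ Neg.neg from rfl, image_comp, image_neg_Ioi,
    neg_zero, image_exp_Iio, exp_zero]

lemma hasDerivWithinAt_exp_neg (s : Set ℝ) (t : ℝ) :
    HasDerivWithinAt (fun t => exp (-t)) (-exp (-t)) s t := by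
  simpa using ((hasDerivAt_neg t).exp).hasDerivWithinAt

lemma injOn_exp_neg (s : Set ℝ) : InjOn (fun t : ℝ => exp (-t)) s :=
  (exp_injective.comp neg_injective).injOn

theorem integral_Ioo_zero_one_eq_integral_Ioi_exp_neg (g : ℝ → ℝ) :
    ∫ x in Ioo 0 1, g x = ∫ t in Ioi 0, exp (-t) * g (exp (-t)) := by
  rw [← image_exp_neg_Ioi_zero, integral_image_eq_integral_abs_deriv_smul measurableSet_Ioi
    (fun t _ => hasDerivWithinAt_exp_neg _ t) (injOn_exp_neg _)]
  simp [abs_of_pos (exp_pos _)]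

theorem integrableOn_Ioo_zero_one_iff_exp_neg (g : ℝ → ℝ) :
    IntegrableOn g (Ioo 0 1) ↔ IntegrableOn (fun t => exp (-t) * g (exp (-t))) (Ioi 0) := by
  rw [← image_exp_neg_Ioi_zero, integrableOn_image_iff_integrableOn_abs_deriv_smul
    measurableSet_Ioi (fun t _ => hasDerivWithinAt_exp_neg _ t) (injOn_exp_neg _)]
  simp [abs_of_pos (exp_pos _)]

theorem integral_pow_mul_exp_neg_mul_Ioi (n : ℕ) {r : ℝ} (hr : 0 < r) :
    ∫ t in Ioi 0, t ^ n * exp (-(r * t)) = n.factorial / r ^ (n + 1) := by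
  have h := integral_rpow_mul_exp_neg_mul_Ioi (a := n + 1) (by positivity) hr
  rw [add_sub_cancel_right, Gamma_nat_eq_factorial] at h
  simp only [rpow_natCast] at h
  rw [h, ← Nat.cast_succ, rpow_natCast, one_div, inv_pow, inv_mul_eq_div]

theorem integrableOn_pow_mul_exp_neg_mul_Ioi (n : ℕ) {r : ℝ} (hr : 0 < r) :
    IntegrableOn (fun t => t ^ n * exp (-(r * t))) (Ioi 0) := by
  have h := integrableOn_rpow_mul_exp_neg_mul_rpow (s := n) (p := 1)
    (neg_one_lt_zero.trans_le n.cast_nonneg) one_pos hr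
  refine h.congr_fun (fun t _ => ?_) measurableSet_Ioi
  simp [rpow_natCast]

lemma exp_neg_mul_pow_mul_neg_log_pow_exp_neg (m n : ℕ) (t : ℝ) :
    exp (-t) * (exp (-t) ^ m * (-log (exp (-t))) ^ n) = t ^ n * exp (-((m + 1) * t)) := by
  rw [log_exp, neg_neg, ← exp_nat_mul, ← mul_assoc, ← exp_add, mul_comm]
  ring_nf

theorem integral_pow_mul_neg_log_pow (m n : ℕ) :
    ∫ x in Ioo 0 1, x ^ m * (-log x) ^ n = n.factorial / (m + 1) ^ (n + 1) := by
  simp only [integral_Ioo_zero_one_eq_integral_Ioi_exp_neg,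
    exp_neg_mul_pow_mul_neg_log_pow_exp_neg]
  exact integral_pow_mul_exp_neg_mul_Ioi n (by positivity)

theorem integrableOn_pow_mul_neg_log_pow (m n : ℕ) :
    IntegrableOn (fun x => x ^ m * (-log x) ^ n) (Ioo 0 1) := by
  simp only [integrableOn_Ioo_zero_one_iff_exp_neg, exp_neg_mul_pow_mul_neg_log_pow_exp_neg]
  exact integrableOn_pow_mul_exp_neg_mul_Ioi n (by positivity)

theorem integral_tsum_mul_neg_log_pow {a : ℕ → ℝ} (ha : Summable a) (e : ℕ → ℕ) (n : ℕ) :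
    ∫ x in Ioo 0 1, (∑' k, a k * x ^ e k) * (-log x) ^ n
      = ∑' k, a k * (n.factorial / (e k + 1) ^ (n + 1)) := by
  have hint (k : ℕ) : Integrable (fun x => a k * (x ^ e k * (-log x) ^ n))
      (volume.restrict (Ioo 0 1)) :=
    (integrableOn_pow_mul_neg_log_pow (e k) n).const_mul (a k)
  have hnorm (k : ℕ) : ∫ x in Ioo 0 1, ‖a k * (x ^ e k * (-log x) ^ n)‖
      = |a k| * (n.factorial / (e k + 1) ^ (n + 1)) := by
    rw [← integral_pow_mul_neg_log_pow, ← integral_const_mul]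
    refine setIntegral_congr_fun measurableSet_Ioo fun x hx => ?_
    have hlog : 0 ≤ -log x := neg_nonneg.mpr (log_nonpos hx.1.le hx.2.le)
    rw [norm_mul, norm_eq_abs, norm_eq_abs,
      abs_of_nonneg (mul_nonneg (pow_nonneg hx.1.le _) (pow_nonneg hlog _))]
  have hsum : Summable fun k => ∫ x in Ioo 0 1, ‖a k * (x ^ e k * (-log x) ^ n)‖ := by
    simp only [hnorm]
    refine ha.abs.mul_right (n.factorial : ℝ) |>.of_nonneg_of_le (fun k => by positivity)
      fun k => mul_le_mul_of_nonneg_left (div_le_self (by positivity) ?_) (abs_nonneg _)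
    exact one_le_pow₀ (le_add_of_nonneg_left (e k).cast_nonneg)
  calc ∫ x in Ioo 0 1, (∑' k, a k * x ^ e k) * (-log x) ^ n
      = ∫ x in Ioo 0 1, ∑' k, a k * (x ^ e k * (-log x) ^ n) := by
        simp only [← tsum_mul_right, mul_assoc]
    _ = ∑' k, ∫ x in Ioo 0 1, a k * (x ^ e k * (-log x) ^ n) :=
        (integral_tsum_of_summable_integral_norm hint hsum).symm
    _ = ∑' k, a k * (n.factorial / (e k + 1) ^ (n + 1)) := by
        simp only [integral_const_mul, integral_pow_mul_neg_log_pow]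

lemma strictMonoOn_two_mul_sin_half : StrictMonoOn (fun θ : ℝ => 2 * sin (θ / 2)) (Icc (-π) π) :=
  fun a ha b hb hab => by
    have hmem {θ : ℝ} (h : θ ∈ Icc (-π) π) : θ / 2 ∈ Icc (-(π / 2)) (π / 2) :=
      ⟨by linarith [h.1], by linarith [h.2]⟩
    simpa using strictMonoOn_sin (hmem ha) (hmem hb) (by linarith)

lemma Icc_zero_pi_div_three_subset : Icc 0 (π / 3) ⊆ Icc (-π) π :=
  Icc_subset_Icc (by linarith [pi_pos]) (by linarith [pi_pos])

lemma image_two_mul_sin_half_Ioo : (fun θ : ℝ => 2 * sin (θ / 2)) '' Ioo 0 (π / 3) = Ioo 0 1 := by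
  rw [ContinuousOn.image_Ioo_of_strictMonoOn (by positivity) (by fun_prop)
    (strictMonoOn_two_mul_sin_half.mono Icc_zero_pi_div_three_subset)]
  norm_num [show π / 3 / 2 = π / 6 by ring]

theorem integral_comp_two_mul_sin_half (f : ℝ → ℝ) :
    ∫ θ in Ioo 0 (π / 3), f (2 * sin (θ / 2)) = ∫ x in Ioo 0 1, f x / √(1 - x ^ 2 / 4) := by
  have hderiv (θ : ℝ) : HasDerivAt (fun θ : ℝ => 2 * sin (θ / 2)) (cos (θ / 2)) θ :=
    (((hasDerivAt_id' θ).div_const 2).sin.const_mul 2).congr_deriv (by ring)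
  rw [← image_two_mul_sin_half_Ioo, integral_image_eq_integral_deriv_smul_of_monotoneOn
    measurableSet_Ioo (fun θ _ => (hderiv θ).hasDerivWithinAt)
    (strictMonoOn_two_mul_sin_half.mono
      (Ioo_subset_Icc_self.trans Icc_zero_pi_div_three_subset)).monotoneOn]
  refine setIntegral_congr_fun measurableSet_Ioo fun θ hθ => ?_
  have hcos : 0 < cos (θ / 2) :=
    cos_pos_of_mem_Ioo ⟨by linarith [hθ.1, pi_pos], by linarith [hθ.2, pi_pos]⟩
  rw [smul_eq_mul, show 1 - (2 * sin (θ / 2)) ^ 2 / 4 = cos (θ / 2) ^ 2 by rw [cos_sq']; ring,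
    sqrt_sq hcos.le, mul_div_cancel₀ _ hcos.ne']

theorem integral_log_two_mul_sin_half_pow (n : ℕ) :
    ∫ θ in (0:ℝ)..(π / 3), log (2 * sin (θ / 2)) ^ n
      = (-1) ^ n *
          ∑' k : ℕ, (k.centralBinom : ℝ) / 16 ^ k * (n.factorial / (2 * k + 1) ^ (n + 1)) := by
  have hsummable : Summable fun k : ℕ => (k.centralBinom : ℝ) / 16 ^ k := by
    simpa using
      (hasSum_centralBinom_div_sixteen_pow_mul_pow_two_mul (x := 1) (by norm_num)).summable
  have hexp {x : ℝ} (hx : x ∈ Ioo 0 1) :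
      (√(1 - x ^ 2 / 4))⁻¹ = ∑' k : ℕ, (k.centralBinom : ℝ) / 16 ^ k * x ^ (2 * k) :=
    (hasSum_centralBinom_div_sixteen_pow_mul_pow_two_mul
      (by rw [abs_of_pos hx.1]; linarith [hx.2])).tsum_eq.symm
  have hlog (x : ℝ) : log x ^ n = (-1) ^ n * (-log x) ^ n := by
    rw [← mul_pow, neg_one_mul, neg_neg]
  rw [intervalIntegral.integral_of_le (by positivity), integral_Ioc_eq_integral_Ioo,
    integral_comp_two_mul_sin_half (fun x : ℝ => log x ^ n)]
  calc ∫ x in Ioo 0 1, log x ^ n / √(1 - x ^ 2 / 4)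
      = ∫ x in Ioo 0 1, (-1) ^ n *
          ((∑' k : ℕ, (k.centralBinom : ℝ) / 16 ^ k * x ^ (2 * k)) * (-log x) ^ n) :=
        setIntegral_congr_fun measurableSet_Ioo fun x hx => by
          rw [div_eq_mul_inv, hexp hx, hlog]; ring
    _ = _ := by
        rw [integral_const_mul, integral_tsum_mul_neg_log_pow hsummable (2 * ·) n]
        push_cast; rfl

theorem ls_pi_over_3_hypergeometric (n : ℕ) :
    (-1:ℝ)^(n+1) / n.factorial *
        (-(∫ θ in (0:ℝ)..(π/3), (Real.log (2 * Real.sin (θ/2)))^n))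
      = ∑' k : ℕ, (2:ℝ)^(-(4:ℤ)*k) / (2*k+1)^(n+1) * (Nat.centralBinom k) := by
  have hsign : (-1 : ℝ) ^ (n + 1) * -(-1) ^ n = 1 := by
    rw [pow_succ]; ring_nf; simp
  have hcoeff (k : ℕ) : (2 : ℝ) ^ (-(4 : ℤ) * k) = 1 / 16 ^ k := by
    rw [neg_mul, zpow_neg, zpow_mul, zpow_natCast]; norm_num
  rw [integral_log_two_mul_sin_half_pow, ← tsum_mul_left, ← tsum_neg, ← tsum_mul_left]
  refine tsum_congr fun k => ?_
  rw [hcoeff]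
  field_simp
  linear_combination (k.centralBinom : ℝ) * hsign
end

section
/- $\int_0^\pi \theta^2 \log(2\sin(\theta/2))\,d\theta = \frac{3}{2}\pi\,\zeta(3)$. -/
open Real Filter Finset Topology intervalIntegral MeasureTheory

-- L1: |1 - e^{iθ}| = 2 sin(θ/2)
lemma abs_one_sub_exp (θ : ℝ) (h1 : 0 ≤ θ) (h2 : θ ≤ 2*π) :
    ‖(1 - Complex.exp (θ * Complex.I))‖ = 2 * Real.sin (θ/2) := by
  have hre : (1 - Complex.exp (θ * Complex.I)).re = 1 - Real.cos θ := by
    simp [Complex.exp_ofReal_mul_I_re]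
  have him : (1 - Complex.exp (θ * Complex.I)).im = - Real.sin θ := by
    simp [Complex.exp_ofReal_mul_I_im]
  have hsin : 0 ≤ Real.sin (θ/2) :=
    Real.sin_nonneg_of_nonneg_of_le_pi (by linarith) (by linarith)
  have hc : Real.cos θ = 2 * Real.cos (θ/2)^2 - 1 := by
    have := Real.cos_two_mul (θ/2); rw [show 2*(θ/2) = θ by ring] at this; exact this
  have hs : Real.sin (θ/2)^2 + Real.cos (θ/2)^2 = 1 := Real.sin_sq_add_cos_sq _
  have : ‖(1 - Complex.exp (θ * Complex.I))‖ ^ 2 = (2 * Real.sin (θ/2))^2 := by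
    rw [Complex.sq_norm, Complex.normSq_apply, hre, him]
    have hsq : Real.sin θ ^2 + Real.cos θ ^2 = 1 := Real.sin_sq_add_cos_sq _
    nlinarith
  have h0 : 0 ≤ ‖(1 - Complex.exp (θ * Complex.I))‖ := norm_nonneg _
  nlinarith [this, h0, mul_nonneg (by norm_num : (0:ℝ) ≤ 2) hsin]

-- L2: geometric sum bound
lemma geom_kernel_bound {z : ℂ} (hz : ‖z‖ = 1) (hzne : z ≠ 1) (n : ℕ) :
    ‖∑ i ∈ range n, z^(i+1)‖ ≤ 2 / ‖1 - z‖ := by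
  have hne : z - 1 ≠ 0 := sub_ne_zero.mpr hzne
  have key : ∑ i ∈ range n, z^(i+1) = z * ((z^n - 1)/(z - 1)) := by
    rw [← geom_sum_eq hzne, Finset.mul_sum]
    exact Finset.sum_congr rfl (fun i _ => by ring)
  have hz' : ‖z‖ = 1 := hz
  have h2 : ‖z^n - 1‖ ≤ 2 := by
    calc ‖z^n - 1‖ ≤ ‖z^n‖ + ‖(1:ℂ)‖ := norm_sub_le _ _
    _ = 2 := by rw [norm_pow, hz']; norm_num
  have hpos : 0 < ‖1 - z‖ := by
    rw [norm_pos_iff]; exact sub_ne_zero.mpr (Ne.symm hzne)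
  rw [key, norm_mul, hz', one_mul, norm_div, norm_sub_rev z 1]
  gcongr


-- L3: Abel summation bound
lemma abel_bound {g : ℕ → ℂ} {b : ℝ} (hb : ∀ n, ‖∑ i ∈ range n, g i‖ ≤ b) (n : ℕ) :
    ‖∑ i ∈ range n, ((1:ℝ)/(i+1)) • g i‖ ≤ b := by
  set f : ℕ → ℝ := fun i => (1:ℝ)/(i+1) with hf
  have hfpos : ∀ i, 0 < f i := fun i => by positivity
  have hfanti : ∀ i, f (i+1) ≤ f i := by
    intro i
    apply one_div_le_one_div_of_le (by positivity)
    push_cast; linarith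
  rw [Finset.sum_range_by_parts]
  have hA : ‖f (n-1) • ∑ i ∈ range n, g i‖ ≤ f (n-1) * b := by
    rw [norm_smul, Real.norm_eq_abs, abs_of_pos (hfpos _)]
    exact mul_le_mul_of_nonneg_left (hb n) (hfpos _).le
  have hB : ‖∑ i ∈ range (n-1), (f (i+1) - f i) • ∑ j ∈ range (i+1), g j‖
      ≤ ∑ i ∈ range (n-1), (f i - f (i+1)) * b := by
    refine (norm_sum_le _ _).trans (Finset.sum_le_sum fun i _ => ?_)
    rw [norm_smul, Real.norm_eq_abs, abs_of_nonpos (by linarith [hfanti i]),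
      (show -(f (i+1) - f i) = f i - f (i+1) by ring)]
    exact mul_le_mul_of_nonneg_left (hb _) (by linarith [hfanti i])
  have htel : ∑ i ∈ range (n-1), (f i - f (i+1)) * b = (f 0 - f (n-1)) * b := by
    rw [← Finset.sum_mul, Finset.sum_range_sub' f (n-1)]
  have hf0 : f 0 = 1 := by simp [hf]
  calc ‖f (n-1) • ∑ i ∈ range n, g i
        - ∑ i ∈ range (n-1), (f (i+1) - f i) • ∑ j ∈ range (i+1), g j‖
      ≤ f (n-1) * b + (f 0 - f (n-1)) * b := by
        rw [htel] at hB
        exact (norm_sub_le _ _).trans (add_le_add hA hB)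
    _ = b := by rw [hf0]; ring

-- uniform-in-N bound for partial sums
lemma partial_cos_bound (θ : ℝ) (h1 : 0 < θ) (h2 : θ ≤ π) (N : ℕ) :
    |∑ n ∈ range N, Real.cos ((n+1)*θ)/(n+1)| ≤ π/θ := by
  have hpi := Real.pi_pos
  set z : ℂ := Complex.exp (θ * Complex.I) with hzdef
  have hz1 : ‖z‖ = 1 := Complex.norm_exp_ofReal_mul_I θ
  have hzne : z ≠ 1 := by
    intro h
    rw [hzdef, Complex.exp_eq_one_iff] at h
    obtain ⟨k, hk⟩ := h
    have hI : ((θ:ℂ)) * Complex.I = ((k:ℂ) * (2*π)) * Complex.I := by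
      rw [hk]; ring
    have h3 : (θ:ℂ) = (k:ℂ) * (2*π) := mul_right_cancel₀ Complex.I_ne_zero hI
    have h4 : θ = (k:ℝ) * (2*π) := by exact_mod_cast h3
    have hk0 : (0:ℝ) < (k:ℝ) := by nlinarith
    have hk0' : (0:ℤ) < k := by exact_mod_cast hk0
    have hk1 : (1:ℝ) ≤ (k:ℝ) := by exact_mod_cast hk0'
    nlinarith
  have hT := abel_bound (geom_kernel_bound hz1 hzne) N
  have hre : (∑ i ∈ range N, ((1:ℝ)/(i+1)) • z^(i+1)).re
      = ∑ n ∈ range N, Real.cos ((n+1)*θ)/(n+1) := by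
    rw [Complex.re_sum]
    refine Finset.sum_congr rfl fun n _ => ?_
    rw [Complex.smul_re]
    have hzpow : z^(n+1) = Complex.exp ((((n+1:ℕ):ℝ)*θ : ℝ) * Complex.I) := by
      rw [hzdef, ← Complex.exp_nat_mul]
      congr 1
      push_cast
      ring
    rw [hzpow, Complex.exp_ofReal_mul_I_re, smul_eq_mul]
    push_cast
    ring
  have habs : ‖(1:ℂ) - z‖ = 2 * Real.sin (θ/2) := abs_one_sub_exp θ h1.le (by linarith)
  have hsin : θ/π ≤ Real.sin (θ/2) := by
    have := Real.mul_le_sin (x := θ/2) (by linarith) (by linarith)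
    calc θ/π = 2/π * (θ/2) := by field_simp
    _ ≤ Real.sin (θ/2) := this
  have hsinpos : 0 < Real.sin (θ/2) := lt_of_lt_of_le (by positivity) hsin
  calc |∑ n ∈ range N, Real.cos ((n+1)*θ)/(n+1)|
      = |(∑ i ∈ range N, ((1:ℝ)/(i+1)) • z^(i+1)).re| := by rw [hre]
    _ ≤ ‖∑ i ∈ range N, ((1:ℝ)/(i+1)) • z^(i+1)‖ := Complex.abs_re_le_norm _
    _ ≤ 2/‖1-z‖ := hT
    _ = 1/Real.sin (θ/2) := by rw [habs]; field_simp
    _ ≤ 1/(θ/π) := by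
        apply one_div_le_one_div_of_le (by positivity) hsin
    _ = π/θ := by field_simp

-- L4: pointwise convergence of the log-sine Fourier series
lemma tendsto_partial_cos (θ : ℝ) (h1 : 0 < θ) (h2 : θ ≤ π) :
    Tendsto (fun N => ∑ n ∈ range N, Real.cos ((n+1)*θ)/(n+1)) atTop
      (𝓝 (-(Real.log (2 * Real.sin (θ/2))))) := by
  have hpi := Real.pi_pos
  set z : ℂ := Complex.exp (θ * Complex.I) with hzdef
  have hz1 : ‖z‖ = 1 := Complex.norm_exp_ofReal_mul_I θ
  have hzne : z ≠ 1 := by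
    intro h
    rw [hzdef, Complex.exp_eq_one_iff] at h
    obtain ⟨k, hk⟩ := h
    have hI : ((θ:ℂ)) * Complex.I = ((k:ℂ) * (2*π)) * Complex.I := by
      rw [hk]; ring
    have h3 : (θ:ℂ) = (k:ℂ) * (2*π) := mul_right_cancel₀ Complex.I_ne_zero hI
    have h4 : θ = (k:ℝ) * (2*π) := by exact_mod_cast h3
    have hk0 : (0:ℝ) < (k:ℝ) := by nlinarith
    have hk0' : (0:ℤ) < k := by exact_mod_cast hk0
    have hk1 : (1:ℝ) ≤ (k:ℝ) := by exact_mod_cast hk0'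
    nlinarith
  have hG : ∀ n, ‖∑ i ∈ range n, z^(i+1)‖ ≤ 2/‖1-z‖ := geom_kernel_bound hz1 hzne
  -- Cauchy sequence via Dirichlet's test
  have hanti : Antitone (fun n : ℕ => (1:ℝ)/(n+1)) := by
    intro a b hab
    apply one_div_le_one_div_of_le (by positivity)
    have := (Nat.cast_le (α := ℝ)).mpr hab
    linarith
  have hf0 : Tendsto (fun n : ℕ => (1:ℝ)/(n+1)) atTop (𝓝 0) :=
    tendsto_one_div_add_atTop_nhds_zero_nat
  have hcauchy : CauchySeq (fun N => ∑ i ∈ range N, ((1:ℝ)/(i+1)) • z^(i+1)) :=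
    hanti.cauchySeq_series_mul_of_tendsto_zero_of_bounded hf0 hG
  obtain ⟨l, hl⟩ := cauchySeq_tendsto_of_complete hcauchy
  -- identify l via Abel's limit theorem
  set a : ℕ → ℂ := fun n => z^n / n with hadef
  have hshift : ∀ N, ∑ i ∈ range (N+1), a i = ∑ i ∈ range N, ((1:ℝ)/(i+1)) • z^(i+1) := by
    intro N
    rw [Finset.sum_range_succ']
    have ha0 : a 0 = 0 := by simp [hadef]
    rw [ha0, add_zero]
    refine Finset.sum_congr rfl fun i _ => ?_
    rw [Complex.real_smul]
    push_cast
    rw [hadef]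
    field_simp
    norm_num
  have hsum : Tendsto (fun N => ∑ i ∈ range N, a i) atTop (𝓝 l) := by
    rw [← tendsto_add_atTop_iff_nat 1]
    exact hl.congr (fun N => (hshift N).symm)
  have habel := Complex.tendsto_tsum_powerSeries_nhdsWithin_lt hsum
  rw [Filter.tendsto_map'_iff] at habel
  have hslit : (1 - z) ∈ Complex.slitPlane := by
    rw [Complex.mem_slitPlane_iff]
    left
    have hre : (1 - z).re = 1 - Real.cos θ := by simp [hzdef, Complex.exp_ofReal_mul_I_re]
    rw [hre]
    have hsin : 0 < Real.sin (θ/2) :=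
      Real.sin_pos_of_pos_of_lt_pi (by linarith) (by linarith)
    have hc : Real.cos θ = 2 * Real.cos (θ/2)^2 - 1 := by
      have := Real.cos_two_mul (θ/2); rw [show 2*(θ/2) = θ by ring] at this; exact this
    have hs : Real.sin (θ/2)^2 + Real.cos (θ/2)^2 = 1 := Real.sin_sq_add_cos_sq _
    nlinarith
  have hlog : Tendsto (fun x : ℝ => -Complex.log (1 - (x:ℂ) * z)) (𝓝[<] (1:ℝ))
      (𝓝 (-Complex.log (1 - z))) := by
    have hc1 : Tendsto (fun x : ℝ => 1 - (x:ℂ) * z) (𝓝[<] (1:ℝ)) (𝓝 (1 - z)) := by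
      have : Continuous (fun x : ℝ => 1 - (x:ℂ) * z) := by continuity
      have h := (this.tendsto 1).mono_left (nhdsWithin_le_nhds (s := Set.Iio (1:ℝ)))
      simpa using h
    exact ((continuousAt_clog hslit).tendsto.comp hc1).neg
  have hev : ∀ᶠ x : ℝ in 𝓝[<] (1:ℝ), (∑' n, a n * (x:ℂ)^n) = -Complex.log (1 - (x:ℂ) * z) := by
    filter_upwards [Ioo_mem_nhdsLT_of_mem
      (show (1:ℝ) ∈ Set.Ioc (-1:ℝ) 1 by constructor <;> norm_num)] with x hx
    have hx1 : ‖(x:ℂ) * z‖ < 1 := by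
      rw [norm_mul, (show ‖z‖ = 1 from hz1), mul_one, Complex.norm_real, Real.norm_eq_abs]
      exact abs_lt.mpr ⟨hx.1, hx.2⟩
    have hts := (Complex.hasSum_taylorSeries_neg_log hx1).tsum_eq
    rw [← hts]
    refine tsum_congr fun n => ?_
    rw [hadef]
    rw [mul_pow]
    ring
  have habel' : Tendsto (fun x : ℝ => -Complex.log (1 - (x:ℂ) * z)) (𝓝[<] (1:ℝ)) (𝓝 l) :=
    habel.congr' hev
  have hleq : l = -Complex.log (1 - z) := tendsto_nhds_unique habel' hlog
  -- take real parts
  have hre : ∀ N, (∑ i ∈ range N, ((1:ℝ)/(i+1)) • z^(i+1)).re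
      = ∑ n ∈ range N, Real.cos ((n+1)*θ)/(n+1) := by
    intro N
    rw [Complex.re_sum]
    refine Finset.sum_congr rfl fun n _ => ?_
    rw [Complex.smul_re]
    have hzpow : z^(n+1) = Complex.exp ((((n+1:ℕ):ℝ)*θ : ℝ) * Complex.I) := by
      rw [hzdef, ← Complex.exp_nat_mul]
      congr 1
      push_cast
      ring
    rw [hzpow, Complex.exp_ofReal_mul_I_re, smul_eq_mul]
    push_cast
    ring
  have hfinal : Tendsto (fun N => (∑ i ∈ range N, ((1:ℝ)/(i+1)) • z^(i+1)).re) atTop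
      (𝓝 ((-Complex.log (1 - z)).re)) := by
    exact (Complex.continuous_re.tendsto _).comp (hleq ▸ hl)
  have hval : (-Complex.log (1 - z)).re = -(Real.log (2 * Real.sin (θ/2))) := by
    rw [Complex.neg_re, Complex.log_re, abs_one_sub_exp θ h1.le (by linarith)]
  rw [hval] at hfinal
  exact hfinal.congr (fun N => hre N)

-- L5: the basic integral
lemma integral_sq_cos (n : ℕ) :
    ∫ θ in (0:ℝ)..π, θ^2 * Real.cos ((n+1)*θ) = 2*π*(-1)^(n+1)/(n+1)^2 := by
  set m : ℝ := (n:ℝ)+1 with hm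
  have hm0 : m ≠ 0 := by positivity
  have hF : ∀ θ : ℝ, HasDerivAt
      (fun θ => θ^2 * Real.sin (m*θ)/m + 2*θ*Real.cos (m*θ)/m^2 - 2*Real.sin (m*θ)/m^3)
      (θ^2 * Real.cos (m*θ)) θ := by
    intro θ
    have hmul : HasDerivAt (fun θ : ℝ => m*θ) m θ := by
      simpa using (hasDerivAt_id θ).const_mul m
    have hsin : HasDerivAt (fun θ => Real.sin (m*θ)) (Real.cos (m*θ) * m) θ := hmul.sin
    have hcos : HasDerivAt (fun θ => Real.cos (m*θ)) (-Real.sin (m*θ) * m) θ := hmul.cos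
    have hsq : HasDerivAt (fun θ : ℝ => θ^2) (2*θ) θ := by simpa using hasDerivAt_pow 2 θ
    have h1 := (hsq.mul hsin).div_const m
    have h2 := (((hasDerivAt_id θ).const_mul 2).mul hcos).div_const (m^2)
    have h3 := (hsin.const_mul 2).div_const (m^3)
    have H := (h1.add h2).sub h3
    refine H.congr_deriv ?_
    simp only [id]
    field_simp
    ring
  have hInt : IntervalIntegrable (fun θ : ℝ => θ^2 * Real.cos (m*θ)) volume 0 π := by
    apply Continuous.intervalIntegrable
    continuity
  rw [intervalIntegral.integral_eq_sub_of_hasDerivAt (fun θ _ => hF θ) hInt]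
  have hs : Real.sin (m*π) = 0 := by
    have h : m*π = ((n+1:ℕ):ℝ)*π := by rw [hm]; push_cast; ring
    rw [h, Real.sin_nat_mul_pi]
  have hc : Real.cos (m*π) = (-1:ℝ)^(n+1) := by
    have h : m*π = ((n+1:ℕ):ℝ)*π - 0 := by rw [hm]; push_cast; ring
    rw [h, Real.cos_nat_mul_pi_sub, Real.cos_zero, mul_one]
  rw [hm] at hs hc ⊢
  simp only [mul_zero, Real.sin_zero, Real.cos_zero, zero_mul, hs, hc]
  field_simp
  ring

set_option maxHeartbeats 2000000 in
theorem ls4_2_pi :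
    ((∫ θ in (0:ℝ)..π, θ^2 * Real.log (2 * Real.sin (θ/2)) : ℝ) : ℂ)
      = 3/2 * (π : ℂ) * riemannZeta 3 := by
  have hpi := Real.pi_pos
  -- the value of the zeta-type sum
  have hsummable : Summable (fun n : ℕ => 1/((n:ℝ)+1)^3) := by
    have h := (Real.summable_one_div_nat_pow (p := 3)).mpr (by norm_num)
    have h2 := (summable_nat_add_iff 1).mpr h
    refine h2.congr fun n => ?_
    push_cast
    ring
  set c : ℝ := ∑' n : ℕ, 1/((n:ℝ)+1)^3 with hc
  have h2c : HasSum (fun n : ℕ => 1/((n:ℝ)+1)^3) c := hsummable.hasSum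
  -- the alternating sum
  have hdiff : HasSum (fun n : ℕ => 1/((n:ℝ)+1)^3 - (-1:ℝ)^n/((n:ℝ)+1)^3) (c/4) := by
    have heven : HasSum (fun k : ℕ => 1/(((2*k:ℕ):ℝ)+1)^3 - (-1:ℝ)^(2*k)/(((2*k:ℕ):ℝ)+1)^3) 0 := by
      refine hasSum_zero.congr_fun fun k => ?_
      rw [pow_mul]
      norm_num
    have hodd' : HasSum (fun k : ℕ => 1/(((2*k+1:ℕ):ℝ)+1)^3 - (-1:ℝ)^(2*k+1)/(((2*k+1:ℕ):ℝ)+1)^3) (c/4) := by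
      have h4 : HasSum (fun k : ℕ => 1/4 * (1/((k:ℝ)+1)^3)) (c/4) := by
        have := h2c.mul_left (1/4)
        rw [show c / 4 = 1 / 4 * c by ring]
        exact this
      refine h4.congr_fun fun k => ?_
      have hpow : (-1:ℝ)^(2*k+1) = -1 := by
        rw [pow_succ, pow_mul]
        norm_num
      rw [hpow]
      push_cast
      have hk : ((k:ℝ)+1) ≠ 0 := by positivity
      field_simp
      ring
    have := HasSum.even_add_odd
      (f := fun n : ℕ => 1/((n:ℝ)+1)^3 - (-1:ℝ)^n/((n:ℝ)+1)^3) heven hodd'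
    rw [zero_add] at this
    exact this
  have heta : HasSum (fun n : ℕ => (-1:ℝ)^n/((n:ℝ)+1)^3) (c - c/4) := by
    have := h2c.sub hdiff
    refine this.congr_fun fun n => ?_
    ring
  have hS : Tendsto (fun N => ∑ n ∈ range N, (-1:ℝ)^n/((n:ℝ)+1)^3) atTop (𝓝 (c - c/4)) :=
    heta.tendsto_sum_nat
  -- integrals of partial sums
  have hI : ∀ N, (∫ θ in (0:ℝ)..π, θ^2 * ∑ n ∈ range N, Real.cos ((n+1)*θ)/(n+1))
      = -2*π * ∑ n ∈ range N, (-1:ℝ)^n/((n:ℝ)+1)^3 := by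
    intro N
    have hfun : (fun θ : ℝ => θ^2 * ∑ n ∈ range N, Real.cos ((n+1)*θ)/(n+1))
        = fun θ : ℝ => ∑ n ∈ range N, (θ^2 * Real.cos ((n+1)*θ))/(n+1) := by
      funext θ
      rw [Finset.mul_sum]
      exact Finset.sum_congr rfl fun n _ => by ring
    rw [hfun, intervalIntegral.integral_finset_sum]
    · have : ∀ n ∈ range N, (∫ θ in (0:ℝ)..π, (θ^2 * Real.cos ((n+1)*θ))/(n+1))
          = 2*π*(-1:ℝ)^(n+1)/((n:ℝ)+1)^2/((n:ℝ)+1) := by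
        intro n _
        rw [intervalIntegral.integral_div, integral_sq_cos n]
      rw [Finset.sum_congr rfl this, Finset.mul_sum]
      refine Finset.sum_congr rfl fun n _ => ?_
      rw [pow_succ]
      have hn : ((n:ℝ)+1) ≠ 0 := by positivity
      field_simp
    · intro n _
      exact (((continuous_pow 2).mul (Real.continuous_cos.comp
        (continuous_const.mul continuous_id))).div_const _).intervalIntegrable _ _
  -- dominated convergence
  have hDCT : Tendsto (fun N => ∫ θ in (0:ℝ)..π, θ^2 * ∑ n ∈ range N, Real.cos ((n+1)*θ)/(n+1))
      atTop (𝓝 (∫ θ in (0:ℝ)..π, θ^2 * (-(Real.log (2 * Real.sin (θ/2)))))) := by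
    apply intervalIntegral.tendsto_integral_filter_of_dominated_convergence
      (bound := fun θ => π * θ)
    · filter_upwards with N
      exact ((continuous_pow 2).mul (continuous_finset_sum _ fun n _ =>
        (Real.continuous_cos.comp (continuous_const.mul continuous_id)).div_const
          _)).aestronglyMeasurable
    · filter_upwards with N
      filter_upwards with θ hθ
      rw [Set.uIoc_of_le hpi.le] at hθ
      have hb := partial_cos_bound θ hθ.1 hθ.2 N
      have h0 : 0 < θ := hθ.1
      rw [Real.norm_eq_abs, abs_mul, abs_of_nonneg (sq_nonneg θ)]
      calc θ^2 * |∑ n ∈ range N, Real.cos ((n+1)*θ)/(n+1)| ≤ θ^2 * (π/θ) := by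
            exact mul_le_mul_of_nonneg_left hb (sq_nonneg θ)
      _ = π * θ := by field_simp
    · exact (continuous_const.mul continuous_id).intervalIntegrable _ _
    · filter_upwards with θ hθ
      rw [Set.uIoc_of_le hpi.le] at hθ
      exact (tendsto_partial_cos θ hθ.1 hθ.2).const_mul (θ^2)
  -- identify the limit
  have hlim : Tendsto (fun N => ∫ θ in (0:ℝ)..π, θ^2 * ∑ n ∈ range N, Real.cos ((n+1)*θ)/(n+1))
      atTop (𝓝 (-2*π * (c - c/4))) := by
    simp only [hI]
    exact (hS.const_mul (-2*π))
  have hkey : (∫ θ in (0:ℝ)..π, θ^2 * (-(Real.log (2 * Real.sin (θ/2))))) = -2*π * (c - c/4) :=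
    tendsto_nhds_unique hDCT hlim
  have hkey2 : (∫ θ in (0:ℝ)..π, θ^2 * Real.log (2 * Real.sin (θ/2))) = 3/2 * π * c := by
    have hneg : (∫ θ in (0:ℝ)..π, θ^2 * (-(Real.log (2 * Real.sin (θ/2)))))
        = -(∫ θ in (0:ℝ)..π, θ^2 * Real.log (2 * Real.sin (θ/2))) := by
      rw [← intervalIntegral.integral_neg]
      congr 1
      funext θ
      ring
    rw [hneg] at hkey
    have := neg_eq_iff_eq_neg.mp hkey
    rw [this]
    ring
  -- relate c to riemannZeta 3
  have hzeta : riemannZeta 3 = (c : ℂ) := by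
    rw [zeta_eq_tsum_one_div_nat_add_one_cpow (by norm_num)]
    rw [hc, Complex.ofReal_tsum]
    refine tsum_congr fun n => ?_
    rw [show (3:ℂ) = ((3:ℕ):ℂ) by norm_num, Complex.cpow_natCast]
    push_cast
    ring
  rw [hkey2, hzeta]
  push_cast
  ring
end

section
/- $\int_0^\pi \theta^3 \log(2\sin(\theta/2))\,d\theta = \frac{9}{4}\pi^2\zeta(3) - \frac{93}{8}\zeta(5)$. -/
/-!
The Fourier series `log (2 sin (θ / 2)) = -∑ cos (n θ) / n` converges only conditionally, so it is
integrated against `θ ^ 3` through its Abel regularisation: for `|r| < 1`,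
`-(1/2) log (1 - 2 r cos θ + r ^ 2) = Re (-log (1 - r e^{iθ})) = ∑ r ^ n cos (n θ) / n`,
which may be integrated termwise. As `r → 1⁻` the integrals converge by dominated convergence
(for `r ≥ 1/2` the logarithm is bounded by `2 |log (2 sin (θ / 2))| + log 4`, which is
integrable), and the series by Abel's theorem. Integrating `θ ^ 3 cos (n θ)` by parts leaves
alternating and plain sums of `n ^ (-3)` and `n ^ (-5)`, which are `ζ(3)` and `ζ(5)` up to the
factors `2 ^ (1 - s) - 1`.
-/

open Real MeasureTheory Filter Set intervalIntegral Topology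

lemma norm_one_sub_ofReal_mul_exp_sq (r θ : ℝ) :
    ‖1 - (r : ℂ) * Complex.exp (θ * Complex.I)‖ ^ 2 = 1 - 2 * r * cos θ + r ^ 2 := by
  rw [Complex.sq_norm, Complex.normSq_apply]
  simp only [Complex.sub_re, Complex.one_re, Complex.mul_re, Complex.ofReal_re,
    Complex.exp_ofReal_mul_I_re, Complex.ofReal_im, Complex.exp_ofReal_mul_I_im, zero_mul, sub_zero,
    Complex.sub_im, Complex.one_im, Complex.mul_im, add_zero, zero_sub, mul_neg, neg_mul, neg_neg]
  linear_combination r ^ 2 * sin_sq_add_cos_sq θ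

lemma hasSum_pow_mul_cos_div (θ : ℝ) {r : ℝ} (hr : |r| < 1) :
    HasSum (fun n : ℕ => r ^ n * cos (n * θ) / n)
      (-(1 / 2) * log (1 - 2 * r * cos θ + r ^ 2)) := by
  set z : ℂ := r * Complex.exp (θ * Complex.I)
  have hz : ‖z‖ < 1 := by simpa [z, Complex.norm_exp_ofReal_mul_I] using hr
  convert (Complex.hasSum_taylorSeries_neg_log hz).mapL Complex.reCLM using 1
  · ext n
    have : z ^ n = ((r ^ n : ℝ) : ℂ) * Complex.exp ((n * θ : ℝ) * Complex.I) := by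
      rw [mul_pow, ← Complex.exp_nat_mul]; push_cast; ring_nf
    rw [Complex.reCLM_apply, this, Complex.div_natCast_re, Complex.re_ofReal_mul,
      Complex.exp_ofReal_mul_I_re]
  · rw [Complex.reCLM_apply, Complex.neg_re, Complex.log_re, ← norm_one_sub_ofReal_mul_exp_sq,
      Real.log_pow]
    ring

lemma one_sub_two_mul_cos_add_sq (r θ : ℝ) :
    1 - 2 * r * cos θ + r ^ 2 = (1 - r) ^ 2 + r * (2 * sin (θ / 2)) ^ 2 := by
  have h := cos_sq_add_sin_sq (θ / 2)
  have hc : cos θ = 2 * cos (θ / 2) ^ 2 - 1 := by rw [← cos_two_mul]; ring_nf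
  rw [hc]
  linear_combination (-4 * r) * h

lemma abs_log_one_sub_two_mul_cos_add_sq_le {r θ : ℝ} (hr : r ∈ Icc (1 / 2) 1)
    (hθ : sin (θ / 2) ≠ 0) :
    |log (1 - 2 * r * cos θ + r ^ 2)| ≤ 2 * |log (2 * sin (θ / 2))| + log 4 := by
  obtain ⟨hr₀, hr₁⟩ := hr
  set s := 2 * sin (θ / 2)
  have hs : 0 < s ^ 2 := by positivity
  have hs₄ : s ^ 2 ≤ 4 := by nlinarith [sin_sq_le_one (θ / 2)]
  rw [one_sub_two_mul_cos_add_sq]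
  have hlower : log (s ^ 2 / 2) ≤ log ((1 - r) ^ 2 + r * s ^ 2) :=
    log_le_log (by positivity) (by nlinarith)
  have hupper : log ((1 - r) ^ 2 + r * s ^ 2) ≤ log 4 := log_le_log (by positivity) (by nlinarith)
  rw [log_div hs.ne' two_ne_zero, log_pow] at hlower
  have h24 : log 2 ≤ log 4 := log_le_log two_pos (by norm_num)
  have h2 : 0 ≤ log 2 := log_nonneg one_le_two
  rw [abs_le]
  constructor <;> push_cast at hlower <;> linarith [abs_nonneg (log s), neg_abs_le (log s)]

lemma hasSum_integral_mul_pow_mul_cos_div {f : ℝ → ℝ} (hf : Continuous f) {r : ℝ} (hr : |r| < 1)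
    (a b : ℝ) :
    HasSum (fun n : ℕ => (∫ θ in a..b, f θ * cos (n * θ)) / n * r ^ n)
      (∫ θ in a..b, f θ * (-(1 / 2) * log (1 - 2 * r * cos θ + r ^ 2))) := by
  obtain ⟨C, hC⟩ := (isCompact_uIcc (a := a) (b := b)).exists_bound_of_continuousOn hf.continuousOn
  have hterm (n : ℕ) (θ : ℝ) : |r ^ n * cos (n * θ) / n| ≤ |r| ^ n := by
    rcases n.eq_zero_or_pos with rfl | hn
    · simp
    rw [abs_div, abs_mul, abs_pow, Nat.abs_cast]
    calc |r| ^ n * |cos (n * θ)| / n ≤ |r| ^ n * |cos (n * θ)| :=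
          div_le_self (by positivity) (Nat.one_le_cast.2 hn)
      _ ≤ |r| ^ n := mul_le_of_le_one_right (by positivity) (abs_cos_le_one _)
  have hbound (n : ℕ) (θ : ℝ) (hθ : θ ∈ uIoc a b) :
      ‖f θ * (r ^ n * cos (n * θ) / n)‖ ≤ C * |r| ^ n := by
    have hfθ := hC θ (uIoc_subset_uIcc hθ)
    rw [norm_mul, Real.norm_eq_abs (_ / _)]
    exact mul_le_mul hfθ (hterm n θ) (abs_nonneg _) ((norm_nonneg _).trans hfθ)
  refine (intervalIntegral.hasSum_integral_of_dominated_convergence (μ := volume)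
    (F := fun (n : ℕ) θ => f θ * (r ^ n * cos (n * θ) / n)) (fun n _ => C * |r| ^ n)
    (fun n => by fun_prop) (fun n => ae_of_all _ (hbound n))
    (ae_of_all _ fun θ _ => (summable_geometric_of_lt_one (abs_nonneg r) hr).mul_left C)
    intervalIntegrable_const
    (ae_of_all _ fun θ _ => (hasSum_pow_mul_cos_div θ hr).mul_left (f θ))).congr_fun fun n => ?_
  rw [← intervalIntegral.integral_div, ← intervalIntegral.integral_mul_const]
  congr 1 with θ
  ring

lemma tendsto_integral_mul_log_one_sub_two_mul_cos_add_sq {f : ℝ → ℝ} (hf : Continuous f) :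
    Tendsto (fun r => ∫ θ in 0..π, f θ * (-(1 / 2) * log (1 - 2 * r * cos θ + r ^ 2))) (𝓝[<] 1)
      (𝓝 (∫ θ in 0..π, f θ * -log (2 * sin (θ / 2)))) := by
  obtain ⟨C, hC⟩ := (isCompact_uIcc (a := 0) (b := π)).exists_bound_of_continuousOn hf.continuousOn
  have hlog : IntervalIntegrable (fun θ => log (2 * sin (θ / 2))) volume 0 π :=
    MeromorphicOn.intervalIntegrable_log (f := fun θ => 2 * sin (θ / 2))
      (AnalyticOnNhd.meromorphicOn fun _ _ =>
        analyticAt_const.mul (analyticAt_sin.comp analyticAt_id.div_const))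
  have hsin {θ : ℝ} (hθ : θ ∈ uIoc 0 π) : 0 < sin (θ / 2) := by
    rw [uIoc_of_le pi_pos.le] at hθ
    exact sin_pos_of_pos_of_lt_pi (by linarith [hθ.1]) (by linarith [hθ.2, pi_pos])
  refine intervalIntegral.tendsto_integral_filter_of_dominated_convergence
    (fun θ => C * (|log (2 * sin (θ / 2))| + log 2))
    (.of_forall fun r => Measurable.aestronglyMeasurable (by fun_prop)) ?_
    ((hlog.norm.add intervalIntegrable_const).const_mul C) (ae_of_all _ fun θ hθ => ?_)
  · filter_upwards [Ioo_mem_nhdsLT (show (1 / 2 : ℝ) < 1 by norm_num)] with r hr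
    refine ae_of_all _ fun θ hθ => ?_
    have hfθ := hC θ (uIoc_subset_uIcc hθ)
    have hq := abs_log_one_sub_two_mul_cos_add_sq_le (Ioo_subset_Icc_self hr) (hsin hθ).ne'
    have h4 : log 4 = 2 * log 2 := by
      rw [show (4 : ℝ) = 2 ^ 2 by norm_num, log_pow]; push_cast; ring
    rw [norm_mul, Real.norm_eq_abs (_ * _), abs_mul, abs_neg,
      abs_of_pos (by norm_num : (0 : ℝ) < 1 / 2)]
    exact mul_le_mul hfθ (by linarith) (by positivity) ((norm_nonneg _).trans hfθ)
  · have hq : (1 - 2 * 1 * cos θ + 1 ^ 2 : ℝ) ≠ 0 := by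
      rw [one_sub_two_mul_cos_add_sq]; have := hsin hθ; positivity
    have hlim : f θ * (-(1 / 2) * log (1 - 2 * 1 * cos θ + 1 ^ 2))
        = f θ * -log (2 * sin (θ / 2)) := by
      rw [one_sub_two_mul_cos_add_sq, sub_self, one_mul, zero_pow two_ne_zero, zero_add, log_pow]
      push_cast; ring
    rw [← hlim]
    have hc : ContinuousAt (fun r : ℝ => f θ * (-(1 / 2) * log (1 - 2 * r * cos θ + r ^ 2))) 1 := by
      fun_prop (disch := exact hq)
    exact hc.tendsto.mono_left nhdsWithin_le_nhds

theorem integral_mul_log_two_mul_sin_half {f : ℝ → ℝ} (hf : Continuous f) {L : ℝ}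
    (hL : HasSum (fun n : ℕ => (∫ θ in 0..π, f θ * cos (n * θ)) / n) L) :
    ∫ θ in 0..π, f θ * log (2 * sin (θ / 2)) = -L := by
  have habel : Tendsto (fun r => ∫ θ in 0..π, f θ * (-(1 / 2) * log (1 - 2 * r * cos θ + r ^ 2)))
      (𝓝[<] 1) (𝓝 L) := by
    refine (Real.tendsto_tsum_powerSeries_nhdsWithin_lt hL.tendsto_sum_nat).congr' ?_
    filter_upwards [Ioo_mem_nhdsLT (show (-1 : ℝ) < 1 by norm_num)] with r hr
    exact (hasSum_integral_mul_pow_mul_cos_div hf (abs_lt.2 hr) 0 π).tsum_eq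
  have h := tendsto_nhds_unique (tendsto_integral_mul_log_one_sub_two_mul_cos_add_sq hf) habel
  simp only [mul_neg, intervalIntegral.integral_neg] at h
  linarith

lemma integral_pow_three_mul_cos {n : ℕ} (hn : n ≠ 0) :
    ∫ θ in 0..π, θ ^ 3 * cos (n * θ)
      = 3 * π ^ 2 * (-1) ^ n / n ^ 2 - 6 * (-1) ^ n / n ^ 4 + 6 / n ^ 4 := by
  have hn' : (n : ℝ) ≠ 0 := Nat.cast_ne_zero.2 hn
  have hderiv (θ : ℝ) : HasDerivAt (fun θ => θ ^ 3 * sin (n * θ) / n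
      + 3 * θ ^ 2 * cos (n * θ) / n ^ 2 - 6 * θ * sin (n * θ) / n ^ 3 - 6 * cos (n * θ) / n ^ 4)
      (θ ^ 3 * cos (n * θ)) θ := by
    have hnθ := (hasDerivAt_id' θ).const_mul (n : ℝ)
    refine ((((((hasDerivAt_pow 3 θ).mul hnθ.sin).div_const (n : ℝ)).add
      ((((hasDerivAt_pow 2 θ).const_mul 3).mul hnθ.cos).div_const ((n : ℝ) ^ 2))).sub
      ((((hasDerivAt_id' θ).const_mul 6).mul hnθ.sin).div_const ((n : ℝ) ^ 3))).sub
      ((hnθ.cos.const_mul 6).div_const ((n : ℝ) ^ 4))).congr_deriv ?_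
    push_cast
    field_simp
    ring
  rw [integral_eq_sub_of_hasDerivAt (fun θ _ => hderiv θ)
    (Continuous.intervalIntegrable (by fun_prop) _ _)]
  simp only [sin_nat_mul_pi, cos_nat_mul_pi, mul_zero, sin_zero, cos_zero]
  ring

lemma hasSum_neg_one_pow_div_pow {p : ℕ} (hp : 1 < p) :
    HasSum (fun n : ℕ => (-1 : ℝ) ^ n / n ^ p) ((2 / 2 ^ p - 1) * ∑' n : ℕ, 1 / (n : ℝ) ^ p) := by
  have hζ := (Real.summable_one_div_nat_pow.2 hp).hasSum
  set g : ℕ → ℝ := fun n => (-1) ^ n / n ^ p + 1 / n ^ p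
  have heven : HasSum (fun k => g (2 * k)) (2 / 2 ^ p * ∑' n : ℕ, 1 / (n : ℝ) ^ p) := by
    refine (hζ.mul_left (2 / 2 ^ p)).congr_fun fun k => ?_
    simp only [g, pow_mul, neg_one_sq, one_pow]
    push_cast
    ring
  have hodd : HasSum (fun k => g (2 * k + 1)) 0 := by
    refine hasSum_zero.congr_fun fun k => ?_
    simp only [g, pow_succ, pow_mul]
    ring
  have h := (heven.even_add_odd hodd).sub hζ
  rw [add_zero, ← sub_one_mul] at h
  exact h.congr_fun fun n => by simp only [g, add_sub_cancel_right]

lemma ofReal_tsum_one_div_nat_pow {p : ℕ} (hp : 1 < p) :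
    ((∑' n : ℕ, 1 / (n : ℝ) ^ p : ℝ) : ℂ) = riemannZeta p := by
  rw [zeta_nat_eq_tsum_of_gt_one hp, Complex.ofReal_tsum]
  push_cast
  rfl

theorem ls5_3_pi :
    ((∫ θ in (0:ℝ)..π, θ^3 * Real.log (2 * Real.sin (θ/2)) : ℝ) : ℂ)
      = 9/4 * (π : ℂ)^2 * riemannZeta 3 - 93/8 * riemannZeta 5 := by
  have hcoeff (n : ℕ) : (∫ θ in 0..π, θ ^ 3 * cos (n * θ)) / n
      = 3 * π ^ 2 * ((-1) ^ n / n ^ 3) - 6 * ((-1) ^ n / n ^ 5) + 6 * (1 / n ^ 5) := by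
    rcases eq_or_ne n 0 with rfl | hn
    · simp -- both sides are divisions by `0`
    rw [integral_pow_three_mul_cos hn]
    field_simp
  have hsum := (((hasSum_neg_one_pow_div_pow (p := 3) (by norm_num)).mul_left (3 * π ^ 2)).sub
    ((hasSum_neg_one_pow_div_pow (p := 5) (by norm_num)).mul_left 6)).add
    (((Real.summable_one_div_nat_pow.2 (by norm_num : 1 < 5)).hasSum).mul_left 6)
  have hζ3 := ofReal_tsum_one_div_nat_pow (p := 3) (by norm_num)
  have hζ5 := ofReal_tsum_one_div_nat_pow (p := 5) (by norm_num)
  rw [Nat.cast_ofNat] at hζ3 hζ5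
  rw [integral_mul_log_two_mul_sin_half (by fun_prop) (hsum.congr_fun hcoeff), ← hζ3, ← hζ5]
  push_cast
  ring
end

section
/- For $0 \le z < 1/4$, $\frac{2}{\pi}\int_0^\pi \mathrm{Li}_2(4z\sin^2\theta)\,d\theta = 4\,\mathrm{Li}_2\Big(\frac{1-\sqrt{1-4z}}{2}\Big) - 2\log^2\Big(\frac{1+\sqrt{1-4z}}{2}\Big)$. -/
/-!
Expanding `Li₂` and integrating term by term with Wallis' formula
`∫₀^π sin^(2n) θ dθ = π C(2n, n) / 4ⁿ` turns the left side into `2 ∑_{n ≥ 1} C(2n, n) zⁿ / n²`.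
Writing `z = u (1 - u)` with `u = (1 - √(1 - 4z)) / 2` makes `1 - 4z = (1 - 2u)²` a square, so the
generating function `∑ C(2n, n) zⁿ = (1 - 4z)^(-1/2)`, which follows from the differential
equation `(1 - 4z) f' = 2 f`, becomes `1 / (1 - 2u)`. Two integrations in `u`, each checked by
comparing derivatives, give `∑_{n ≥ 1} C(2n, n) zⁿ / n = -2 log (1 - u)` and then
`∑_{n ≥ 1} C(2n, n) zⁿ / n² = 2 Li₂(u) - log² (1 - u)`.
-/

open Real

/-- The dilogarithm `Li₂(w) = ∑_{n≥1} wⁿ/n²`. -/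
noncomputable def li2 (w : ℝ) : ℝ := ∑' n : ℕ, w^(n+1) / ((n:ℝ)+1)^2

open Set

section PowerSeries

variable {c : ℕ → ℝ} {C ρ x : ℝ}

theorem summable_succ_mul_mul_pow_of_bound (hc : ∀ n, |c n| * ρ ^ n ≤ C) (hx : |x| < ρ) :
    Summable fun n : ℕ => ((n : ℝ) + 1) * c n * x ^ n := by
  have hρ : 0 < ρ := (abs_nonneg x).trans_lt hx
  have hr : ‖|x| / ρ‖ < 1 := by
    rw [norm_div, Real.norm_eq_abs, Real.norm_eq_abs, abs_abs, abs_of_pos hρ, div_lt_one hρ]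
    exact hx
  have hgeom : Summable fun n : ℕ => C * (((n : ℝ) ^ 1 * (|x| / ρ) ^ n) + (|x| / ρ) ^ n) :=
    ((summable_pow_mul_geometric_of_norm_lt_one 1 hr).add
      (summable_geometric_of_norm_lt_one hr)).mul_left C
  refine Summable.of_norm_bounded hgeom fun n => ?_
  have hcn : |c n| * |x| ^ n ≤ C * (|x| / ρ) ^ n := by
    rw [div_pow, mul_div_assoc', le_div_iff₀ (by positivity), mul_assoc, ← mul_pow,
      mul_comm |x|, mul_pow, ← mul_assoc]
    exact mul_le_mul_of_nonneg_right (hc n) (by positivity)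
  rw [Real.norm_eq_abs, abs_mul, abs_mul, abs_pow, abs_of_nonneg (by positivity), pow_one,
    mul_assoc, ← add_one_mul, mul_comm C, mul_assoc]
  exact mul_le_mul_of_nonneg_left (by linarith) (by positivity)

theorem summable_mul_pow_of_bound (hc : ∀ n, |c n| * ρ ^ n ≤ C) (hx : |x| < ρ) :
    Summable fun n : ℕ => c n * x ^ n := by
  refine Summable.of_norm_bounded (summable_succ_mul_mul_pow_of_bound hc hx).norm fun n => ?_
  rw [mul_assoc ((n : ℝ) + 1), norm_mul _ (c n * _)]
  refine le_mul_of_one_le_left (norm_nonneg _) ?_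
  rw [Real.norm_eq_abs, abs_of_nonneg (by positivity)]
  linarith [(n.cast_nonneg : (0 : ℝ) ≤ n)]

theorem hasDerivAt_tsum_mul_pow_succ (hc : ∀ n, |c n| * ρ ^ n ≤ C) (hx : |x| < ρ) :
    HasDerivAt (fun y => ∑' n : ℕ, c n * y ^ (n + 1)) (∑' n : ℕ, ((n : ℝ) + 1) * c n * x ^ n)
      x := by
  obtain ⟨r, hxr, hrρ⟩ := exists_between hx
  have hr : 0 < r := (abs_nonneg x).trans_lt hxr
  refine hasDerivAt_tsum_of_isPreconnected (y₀ := (0 : ℝ)) (g := fun n y => c n * y ^ (n + 1))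
    (g' := fun n y => ((n : ℝ) + 1) * c n * y ^ n)
    (summable_succ_mul_mul_pow_of_bound hc (x := r) (by rwa [abs_of_pos hr])).norm
    isOpen_Ioo isPreconnected_Ioo (fun n y _ => ?_) (fun n y hy => ?_)
    ⟨neg_lt_zero.mpr hr, hr⟩ ?_ (abs_lt.mp hxr)
  · simpa [mul_comm, mul_assoc, mul_left_comm] using (hasDerivAt_pow (n + 1) y).const_mul (c n)
  · have hyr : |y| ≤ |r| := by rw [abs_of_pos hr]; exact (abs_lt.mpr hy).le
    simp only [norm_mul, norm_pow, Real.norm_eq_abs]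
    gcongr
  · simp

end PowerSeries

/-- `∑_{n ≥ 1} C(2n, n) zⁿ / nᵏ`. -/
noncomputable def centralBinomSeries (k : ℕ) (z : ℝ) : ℝ :=
  ∑' n : ℕ, ((n + 1).centralBinom : ℝ) / ((n : ℝ) + 1) ^ k * z ^ (n + 1)

section CentralBinomSeries

variable {z : ℝ}

theorem abs_centralBinom_div_mul_le (k n : ℕ) :
    |((n + 1).centralBinom : ℝ) / ((n : ℝ) + 1) ^ k| * (1 / 4) ^ n ≤ 4 := by
  have hcb : ((n + 1).centralBinom : ℝ) ≤ 4 ^ (n + 1) := by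
    exact_mod_cast Nat.centralBinom_le_four_pow (n + 1)
  have hk : 1 ≤ ((n : ℝ) + 1) ^ k := one_le_pow₀ (by linarith [(n.cast_nonneg : (0 : ℝ) ≤ n)])
  calc |((n + 1).centralBinom : ℝ) / ((n : ℝ) + 1) ^ k| * (1 / 4) ^ n
      ≤ 4 ^ (n + 1) * (1 / 4) ^ n := by
        rw [abs_of_nonneg (by positivity)]
        gcongr
        exact (div_le_self (by positivity) hk).trans hcb
    _ = 4 := by rw [pow_succ, mul_right_comm, ← mul_pow]; norm_num

theorem summable_centralBinomSeries (k : ℕ) (hz : |z| < 1 / 4) :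
    Summable fun n : ℕ => ((n + 1).centralBinom : ℝ) / ((n : ℝ) + 1) ^ k * z ^ (n + 1) := by
  simpa only [pow_succ, mul_assoc] using
    (summable_mul_pow_of_bound (abs_centralBinom_div_mul_le k) hz).mul_right z

theorem hasDerivAt_centralBinomSeries (k : ℕ) (hz : |z| < 1 / 4) :
    HasDerivAt (centralBinomSeries k)
      (∑' n : ℕ, ((n : ℝ) + 1) * (((n + 1).centralBinom : ℝ) / ((n : ℝ) + 1) ^ k) * z ^ n) z :=
  hasDerivAt_tsum_mul_pow_succ (abs_centralBinom_div_mul_le k) hz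

theorem hasDerivAt_centralBinomSeries_succ (k : ℕ) (hz : |z| < 1 / 4) (hz0 : z ≠ 0) :
    HasDerivAt (centralBinomSeries (k + 1)) (centralBinomSeries k z / z) z := by
  convert hasDerivAt_centralBinomSeries (k + 1) hz using 1
  rw [div_eq_iff hz0, centralBinomSeries, ← tsum_mul_right]
  refine tsum_congr fun n => ?_
  have : (n : ℝ) + 1 ≠ 0 := by positivity
  field_simp
  ring

theorem one_sub_four_mul_mul_deriv_centralBinomSeries_zero (hz : |z| < 1 / 4) :
    (1 - 4 * z) * ∑' n : ℕ, ((n : ℝ) + 1) * ((n + 1).centralBinom : ℝ) * z ^ n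
      = 2 * (1 + centralBinomSeries 0 z) := by
  have hD : Summable fun n : ℕ => ((n : ℝ) + 1) * ((n + 1).centralBinom : ℝ) * z ^ n := by
    simpa only [pow_zero, div_one] using
      summable_succ_mul_mul_pow_of_bound (abs_centralBinom_div_mul_le 0) hz
  have hrec (n : ℕ) : ((n : ℝ) + 1 + 1) * ((n + 1 + 1).centralBinom : ℝ)
      = 4 * ((n : ℝ) + 1) * (n + 1).centralBinom + 2 * (n + 1).centralBinom := by
    have := Nat.succ_mul_centralBinom_succ (n + 1)
    rw [← Nat.cast_inj (R := ℝ)] at this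
    push_cast at this
    linear_combination this
  have hhead : ∑' n : ℕ, ((n : ℝ) + 1) * ((n + 1).centralBinom : ℝ) * z ^ n
      = 2 + ∑' n : ℕ, ((n : ℝ) + 1 + 1) * ((n + 1 + 1).centralBinom : ℝ) * z ^ (n + 1) := by
    rw [hD.tsum_eq_zero_add]
    norm_num [Nat.centralBinom, Nat.choose]
  have htail : ∑' n : ℕ, ((n : ℝ) + 1 + 1) * ((n + 1 + 1).centralBinom : ℝ) * z ^ (n + 1)
      = 4 * z * ∑' n : ℕ, ((n : ℝ) + 1) * ((n + 1).centralBinom : ℝ) * z ^ n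
        + 2 * centralBinomSeries 0 z := by
    rw [centralBinomSeries, ← tsum_mul_left, ← tsum_mul_left,
      ← (hD.mul_left _).tsum_add ((summable_centralBinomSeries 0 hz).mul_left _)]
    refine tsum_congr fun n => ?_
    simp only [pow_zero, div_one]
    linear_combination z ^ (n + 1) * hrec n
  linear_combination hhead + htail

end CentralBinomSeries

theorem eq_of_hasDerivAt_eq_of_continuousOn {f g f' : ℝ → ℝ} {a b : ℝ} (hab : a ≤ b)
    (hfc : ContinuousOn f (Icc a b)) (hgc : ContinuousOn g (Icc a b))
    (hf : ∀ x ∈ Ioo a b, HasDerivAt f (f' x) x) (hg : ∀ x ∈ Ioo a b, HasDerivAt g (f' x) x)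
    (ha : f a = g a) : f b = g b := by
  rcases hab.eq_or_lt with rfl | hlt
  · exact ha
  obtain ⟨c, -, hc⟩ := exists_hasDerivAt_eq_slope (f - g) (fun _ => 0) hlt (hfc.sub hgc)
    fun x hx => by simpa using (hf x hx).sub (hg x hx)
  rw [eq_comm, div_eq_zero_iff, sub_eq_zero, sub_eq_zero] at hc
  rcases hc with hc | hc
  · simpa [sub_eq_zero, ha] using hc
  · exact absurd hc hlt.ne'

theorem hasDerivAt_li2_tsum {v : ℝ} (hv : |v| < 1) :
    HasDerivAt li2 (∑' n : ℕ, v ^ n / ((n : ℝ) + 1)) v := by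
  have hc (n : ℕ) : |(((n : ℝ) + 1) ^ 2)⁻¹| * 1 ^ n ≤ 1 := by
    rw [one_pow, mul_one, abs_of_pos (by positivity)]
    exact inv_le_one_of_one_le₀ (one_le_pow₀ (by linarith [(n.cast_nonneg : (0 : ℝ) ≤ n)]))
  convert hasDerivAt_tsum_mul_pow_succ hc hv using 1
  · ext w
    exact tsum_congr fun n => div_eq_inv_mul _ _
  · refine tsum_congr fun n => ?_
    have : (n : ℝ) + 1 ≠ 0 := by positivity
    field_simp

theorem hasDerivAt_li2 {v : ℝ} (hv : |v| < 1) (hv0 : v ≠ 0) :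
    HasDerivAt li2 (-log (1 - v) / v) v := by
  convert hasDerivAt_li2_tsum hv using 1
  rw [div_eq_iff hv0, ← (hasSum_pow_div_log_of_abs_lt_one hv).tsum_eq, ← tsum_mul_right]
  exact tsum_congr fun n => by ring

section MulOneSub

variable {u : ℝ}

theorem hasDerivAt_mul_one_sub (v : ℝ) : HasDerivAt (fun t : ℝ => t * (1 - t)) (1 - 2 * v) v := by
  refine ((hasDerivAt_id' v).mul ((hasDerivAt_id' v).const_sub 1)).congr_deriv ?_
  ring

theorem abs_mul_one_sub_lt {v : ℝ} (h0 : 0 ≤ v) (h : v < 1 / 2) : |v * (1 - v)| < 1 / 4 := by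
  rw [abs_of_nonneg (by nlinarith)]
  nlinarith

theorem continuousOn_centralBinomSeries_mul_one_sub (k : ℕ) (hu : u < 1 / 2) :
    ContinuousOn (fun v => centralBinomSeries k (v * (1 - v))) (Icc 0 u) :=
  continuousOn_of_forall_continuousAt fun v hv =>
    (hasDerivAt_centralBinomSeries k (abs_mul_one_sub_lt hv.1 (hv.2.trans_lt hu))).continuousAt
      |>.comp (f := fun t => t * (1 - t)) (hasDerivAt_mul_one_sub v).continuousAt

theorem continuousOn_log_one_sub (hu : u < 1) : ContinuousOn (fun v => log (1 - v)) (Icc 0 u) :=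
  ContinuousOn.log (by fun_prop) fun v hv => by linarith [hv.2]

theorem hasDerivAt_centralBinomSeries_succ_mul_one_sub (k : ℕ) {v : ℝ} (h0 : 0 < v)
    (h : v < 1 / 2) :
    HasDerivAt (fun t => centralBinomSeries (k + 1) (t * (1 - t)))
      (centralBinomSeries k (v * (1 - v)) / (v * (1 - v)) * (1 - 2 * v)) v := by
  have hz0 : v * (1 - v) ≠ 0 := by nlinarith
  exact (hasDerivAt_centralBinomSeries_succ k (abs_mul_one_sub_lt h0.le h) hz0).comp v
    (hasDerivAt_mul_one_sub v)

theorem centralBinomSeries_zero_mul_one_sub (h0 : 0 ≤ u) (hu : u < 1 / 2) :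
    centralBinomSeries 0 (u * (1 - u)) = 2 * u / (1 - 2 * u) := by
  suffices (1 + centralBinomSeries 0 (u * (1 - u))) * (1 - 2 * u) = 1 by
    rw [eq_div_iff (by linarith)]
    linear_combination this
  refine eq_of_hasDerivAt_eq_of_continuousOn
    (f := fun v => (1 + centralBinomSeries 0 (v * (1 - v))) * (1 - 2 * v)) (g := fun _ => 1)
    (f' := fun _ => 0) h0
    ((continuousOn_const.add (continuousOn_centralBinomSeries_mul_one_sub 0 hu)).mul
      (by fun_prop)) continuousOn_const (fun v hv => ?_) (fun v _ => hasDerivAt_const v 1)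
    (by simp [centralBinomSeries])
  have hz := abs_mul_one_sub_lt hv.1.le (hv.2.trans hu)
  have hD := ((hasDerivAt_centralBinomSeries 0 hz).comp v (hasDerivAt_mul_one_sub v)).const_add 1
  refine (hD.mul (((hasDerivAt_id' v).const_mul 2).const_sub 1)).congr_deriv ?_
  simp only [pow_zero, div_one, Function.comp_apply]
  linear_combination one_sub_four_mul_mul_deriv_centralBinomSeries_zero hz

theorem centralBinomSeries_one_mul_one_sub (h0 : 0 ≤ u) (hu : u < 1 / 2) :
    centralBinomSeries 1 (u * (1 - u)) = -2 * log (1 - u) := by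
  refine eq_of_hasDerivAt_eq_of_continuousOn (g := fun v => -2 * log (1 - v))
    (f' := fun v => 2 / (1 - v)) h0
    (continuousOn_centralBinomSeries_mul_one_sub 1 hu)
    (continuousOn_const.mul (continuousOn_log_one_sub (by linarith))) (fun v hv => ?_)
    (fun v hv => ?_) (by simp [centralBinomSeries])
  · have hv' : v < 1 / 2 := hv.2.trans hu
    convert hasDerivAt_centralBinomSeries_succ_mul_one_sub 0 hv.1 hv' using 1
    rw [centralBinomSeries_zero_mul_one_sub hv.1.le hv']
    have : 1 - v ≠ 0 := by linarith
    have : 1 - 2 * v ≠ 0 := by linarith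
    field_simp [hv.1.ne']
  · have : 1 - v ≠ 0 := by linarith [hv.2]
    refine (((hasDerivAt_id' v).const_sub 1).log this |>.const_mul (-2)).congr_deriv ?_
    field_simp

theorem centralBinomSeries_two_mul_one_sub (h0 : 0 ≤ u) (hu : u < 1 / 2) :
    centralBinomSeries 2 (u * (1 - u)) = 2 * li2 u - log (1 - u) ^ 2 := by
  refine eq_of_hasDerivAt_eq_of_continuousOn (g := fun v => 2 * li2 v - log (1 - v) ^ 2)
    (f' := fun v => -2 * log (1 - v) * (1 - 2 * v) / (v * (1 - v))) h0
    (continuousOn_centralBinomSeries_mul_one_sub 2 hu)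
    ((continuousOn_const.mul ?_).sub ((continuousOn_log_one_sub (by linarith)).pow 2))
    (fun v hv => ?_) (fun v hv => ?_) (by simp [centralBinomSeries, li2])
  · refine continuousOn_of_forall_continuousAt fun v hv => ?_
    exact (hasDerivAt_li2_tsum (by rw [abs_lt]; constructor <;> linarith [hv.1, hv.2]))
      |>.continuousAt
  · have hv' : v < 1 / 2 := hv.2.trans hu
    convert hasDerivAt_centralBinomSeries_succ_mul_one_sub 1 hv.1 hv' using 1
    rw [centralBinomSeries_one_mul_one_sub hv.1.le hv']
    ring
  · have hv0 : v ≠ 0 := hv.1.ne'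
    have hv1 : 1 - v ≠ 0 := by linarith [hv.2]
    have hli2 := hasDerivAt_li2 (by rw [abs_lt]; constructor <;> linarith [hv.1, hv.2]) hv0
    have hlog := ((hasDerivAt_id' v).const_sub 1).log hv1
    refine ((hli2.const_mul 2).sub (hlog.pow 2)).congr_deriv ?_
    field_simp
    ring

end MulOneSub

theorem prod_range_odd_div_even_eq_centralBinom_div (n : ℕ) :
    ∏ i ∈ Finset.range n, (2 * (i : ℝ) + 1) / (2 * i + 2) = n.centralBinom / 4 ^ n := by
  induction n with
  | zero => simp
  | succ k ih =>
    have hrec := Nat.succ_mul_centralBinom_succ k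
    rw [← Nat.cast_inj (R := ℝ)] at hrec
    push_cast at hrec
    rw [Finset.prod_range_succ, ih]
    field_simp
    linear_combination (-2 * (4 : ℝ) ^ k) * hrec

theorem integral_sin_pow_two_mul (n : ℕ) :
    ∫ θ in (0 : ℝ)..π, sin θ ^ (2 * n) = π * (n.centralBinom / 4 ^ n) := by
  rw [integral_sin_pow_even, prod_range_odd_div_even_eq_centralBinom_div]

theorem integral_li2_four_mul_sin_sq {z : ℝ} (hz : |z| < 1 / 4) :
    ∫ θ in (0 : ℝ)..π, li2 (4 * z * sin θ ^ 2) = π * centralBinomSeries 2 z := by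
  have hbound (n : ℕ) (θ : ℝ) :
      ‖(4 * z * sin θ ^ 2) ^ (n + 1) / ((n : ℝ) + 1) ^ 2‖ ≤ |4 * z| ^ (n + 1) := by
    have hn : 1 ≤ ((n : ℝ) + 1) ^ 2 := one_le_pow₀ (by linarith [(n.cast_nonneg : (0 : ℝ) ≤ n)])
    rw [norm_div, norm_pow, Real.norm_eq_abs, norm_of_nonneg (by positivity), abs_mul (4 * z),
      abs_of_nonneg (sq_nonneg (sin θ))]
    refine (div_le_self (by positivity) hn).trans (pow_le_pow_left₀ (by positivity) ?_ _)
    exact mul_le_of_le_one_right (abs_nonneg _) (sin_sq_le_one θ)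
  have h4z : |4 * z| < 1 := by rw [abs_mul]; norm_num; linarith
  have hgeom : Summable fun n : ℕ => |4 * z| ^ (n + 1) := by
    simpa only [pow_succ'] using (summable_geometric_of_lt_one (abs_nonneg _) h4z).mul_left _
  have hsum : HasSum
      (fun n : ℕ => ∫ θ in (0 : ℝ)..π, (4 * z * sin θ ^ 2) ^ (n + 1) / ((n : ℝ) + 1) ^ 2)
      (∫ θ in (0 : ℝ)..π, li2 (4 * z * sin θ ^ 2)) :=
    intervalIntegral.hasSum_integral_of_dominated_convergence
      (fun n _ => |4 * z| ^ (n + 1)) (fun n => (by fun_prop : Continuous _).aestronglyMeasurable)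
      (fun n => Filter.Eventually.of_forall fun θ _ => hbound n θ)
      (Filter.Eventually.of_forall fun _ _ => hgeom) intervalIntegrable_const
      (Filter.Eventually.of_forall fun θ _ => (hgeom.of_norm_bounded (hbound · θ)).hasSum)
  rw [← hsum.tsum_eq, centralBinomSeries, ← tsum_mul_left]
  refine tsum_congr fun n => ?_
  have hterm (θ : ℝ) : (4 * z * sin θ ^ 2) ^ (n + 1) / ((n : ℝ) + 1) ^ 2
      = (4 * z) ^ (n + 1) / ((n : ℝ) + 1) ^ 2 * sin θ ^ (2 * (n + 1)) := by
    rw [mul_pow, pow_mul]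
    ring
  simp_rw [hterm]
  rw [intervalIntegral.integral_const_mul, integral_sin_pow_two_mul, mul_pow]
  field_simp

theorem dilog_integral_closed_form (z : ℝ) (h0 : 0 ≤ z) (h1 : z < 1/4) :
    (2/π) * ∫ θ in (0:ℝ)..π, li2 (4 * z * (Real.sin θ)^2)
      = 4 * li2 ((1 - Real.sqrt (1 - 4*z)) / 2)
        - 2 * (Real.log ((1 + Real.sqrt (1 - 4*z)) / 2))^2 := by
  set s := √(1 - 4 * z)
  have hs_sq : s ^ 2 = 1 - 4 * z := sq_sqrt (by linarith)
  have hs_pos : 0 < s := sqrt_pos.mpr (by linarith)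
  have hs_le : s ≤ 1 := sqrt_le_one.mpr (by linarith)
  set u := (1 - s) / 2
  have hz : z = u * (1 - u) := by linear_combination hs_sq / 4
  have hu : (1 + s) / 2 = 1 - u := by ring
  rw [integral_li2_four_mul_sin_sq (by rw [abs_of_nonneg h0]; exact h1), hu, hz,
    centralBinomSeries_two_mul_one_sub (by linarith) (by linarith)]
  field_simp
  ring
end
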